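/- arXiv:1901.08240 — 8 statements merged into one kernel-verified Lean document; each statement's English description precedes it below -/
import Mathlib

section
/- For a path graph P_n on n vertices, the strong conflict-free connection number equals ⌈log₂ n⌉. -/
open SimpleGraph

/-- An edge-coloring `c` makes `G` strongly conflict-free connected if every pair of
distinct vertices is joined by a shortest path on which some color appears exactly once. -/
def IsStrongCFCColoring {V : Type*} (G : SimpleGraph V) (c : Sym2 V → ℕ) : Prop :=
  ∀ u v : V, u ≠ v → ∃ p : G.Walk u v, p.IsPath ∧ p.length = G.dist u v ∧
    ∃ a : ℕ, (p.edges.map c).count a = 1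

/-- The strong conflict-free connection number: the least number of colors needed. -/
noncomputable def scfc {V : Type*} (G : SimpleGraph V) : ℕ :=
  sInf {k | ∃ c : Sym2 V → ℕ, (∀ e ∈ G.edgeSet, c e < k) ∧ IsStrongCFCColoring G c}

/-!
Upper bound: colour the edge `{i, i + 1}` by the 2-adic valuation of `i + 1`. In a block of
consecutive positive integers the largest valuation is attained only once, and every valuation of a
positive integer below `n` is below `⌈log₂ n⌉`.

Lower bound: shortest paths in `P_n` are unique, so in the sequence of edge colours every block has
a colour occurring exactly once in it. Removing the colour that occurs once in the whole sequence
leaves two such sequences with one colour fewer, so a sequence using `j` colours has length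
below `2 ^ j`.
-/

namespace List

theorem count_eq_one_iff {α : Type*} [DecidableEq α] {l : List α} {a : α} :
    l.count a = 1 ↔ ∃ s t, l = s ++ a :: t ∧ a ∉ s ∧ a ∉ t := by
  constructor
  · intro h
    obtain ⟨s, t, rfl⟩ := append_of_mem (count_pos_iff.1 (h ▸ Nat.one_pos))
    simp only [count_append, count_cons_self] at h
    exact ⟨s, t, rfl, count_eq_zero.1 (by omega), count_eq_zero.1 (by omega)⟩
  · rintro ⟨s, t, rfl, hs, ht⟩
    simp [count_append, count_eq_zero_of_not_mem hs, count_eq_zero_of_not_mem ht]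

theorem exists_eq_range'_of_infix {l : List ℕ} {s n : ℕ} (hl : l <:+: range' s n) :
    ∃ t k, l = range' t k ∧ s ≤ t ∧ t + k ≤ s + n := by
  obtain ⟨a, b, h⟩ := hl
  obtain ⟨k₁, hk₁, hal, -⟩ := range'_eq_append_iff.1 h.symm
  obtain ⟨k₂, hk₂, -, rfl⟩ := range'_eq_append_iff.1 hal.symm
  exact ⟨s + k₂ * 1, k₁ - k₂, rfl, by omega, by omega⟩

def IsIntervalConflictFree {α : Type*} [DecidableEq α] (l : List α) : Prop :=
  ∀ m, m <:+: l → m ≠ [] → ∃ a, m.count a = 1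

theorem IsIntervalConflictFree.of_infix {α : Type*} [DecidableEq α] {l m : List α}
    (hl : l.IsIntervalConflictFree) (hm : m <:+: l) : m.IsIntervalConflictFree :=
  fun k hk hne => hl k (hk.trans hm) hne

theorem IsIntervalConflictFree.length_lt_two_pow {α : Type*} [DecidableEq α] {l : List α}
    (hl : l.IsIntervalConflictFree) : l.length < 2 ^ l.toFinset.card := by
  induction hlen : l.length using Nat.strong_induction_on generalizing l with
  | _ len ih =>
  subst hlen
  rcases eq_or_ne l [] with rfl | hne
  · simp
  obtain ⟨a, ha⟩ := hl l (infix_refl l) hne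
  obtain ⟨s, t, rfl, has, hat⟩ := count_eq_one_iff.1 ha
  have hs_infix : s <:+: s ++ a :: t := infix_append_left
  have ht_infix : t <:+: s ++ a :: t := (infix_cons (infix_refl t)).trans infix_append_right
  have hcard : ∀ r, r <:+: s ++ a :: t → a ∉ r →
      2 ^ r.toFinset.card * 2 ≤ 2 ^ (s ++ a :: t).toFinset.card := by
    intro r hr har
    rw [← pow_succ]
    refine Nat.pow_le_pow_right two_pos (Finset.card_lt_card ⟨?_, ?_⟩)
    · intro x hx
      exact mem_toFinset.2 (hr.subset (mem_toFinset.1 hx))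
    · exact fun h => har (mem_toFinset.1 (h (by simp)))
  have hs := ih s.length (by simp only [length_append, length_cons]; omega)
    (hl.of_infix hs_infix) rfl
  have ht := ih t.length (by simp only [length_append, length_cons]; omega)
    (hl.of_infix ht_infix) rfl
  have hs' := hcard s hs_infix has
  have ht' := hcard t ht_infix hat
  simp only [length_append, length_cons]
  omega

end List

theorem exists_padicValNat_two_gt {a b : ℕ} (ha : 0 < a) (hab : a < b)
    (h : padicValNat 2 a = padicValNat 2 b) :
    ∃ m, a < m ∧ m < b ∧ padicValNat 2 a < padicValNat 2 m := by
  set t := padicValNat 2 a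
  obtain ⟨q, hq⟩ : 2 ^ t ∣ a := pow_padicValNat_dvd
  have hq_odd : ¬ 2 ∣ q := fun ⟨r, hr⟩ => by
    have : 2 ^ (t + 1) ∣ a := ⟨r, by rw [hq, hr]; ring⟩
    rw [padicValNat_dvd_iff_le ha.ne'] at this
    omega
  have hm : t < padicValNat 2 (a + 2 ^ t) := by
    refine (padicValNat_dvd_iff_le (by positivity)).1 ?_
    rw [hq, pow_succ, ← mul_add_one]
    exact Nat.mul_dvd_mul_left _ (by omega)
  have hle : a + 2 ^ t ≤ b := by
    have hb : 2 ^ t ∣ b := h ▸ pow_padicValNat_dvd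
    have := Nat.le_of_dvd (by omega) (Nat.dvd_sub hb ⟨q, hq⟩)
    omega
  have hne : a + 2 ^ t ≠ b := fun hb => by rw [hb, ← h] at hm; exact lt_irrefl _ hm
  exact ⟨a + 2 ^ t, Nat.lt_add_of_pos_right (by positivity), lt_of_le_of_ne hle hne, hm⟩

theorem exists_count_map_padicValNat_two_range'_eq_one {s n : ℕ} (hs : 0 < s) (hn : 0 < n) :
    ∃ a, ((List.range' s n).map (padicValNat 2)).count a = 1 := by
  obtain ⟨k, hk, hmax⟩ := (Finset.Ico s (s + n)).exists_max_image (padicValNat 2)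
    ⟨s, Finset.mem_Ico.2 ⟨le_rfl, by omega⟩⟩
  rw [Finset.mem_Ico] at hk
  obtain ⟨d, hd⟩ := Nat.exists_eq_add_of_le hk.1
  have hsplit : List.range' s n = List.range' s d ++ k :: List.range' (k + 1) (n - d - 1) := by
    rw [hd, ← List.range'_succ, List.range'_append_1]
    congr 1
    omega
  have hunique : ∀ i, s ≤ i → i < s + n → padicValNat 2 i = padicValNat 2 k → i = k := by
    intro i hi₁ hi₂ hik
    by_contra hne
    obtain ⟨m, hm₁, hm₂, hm⟩ :
        ∃ m, min i k < m ∧ m < max i k ∧ padicValNat 2 k < padicValNat 2 m := by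
      rcases Nat.lt_or_gt_of_ne hne with h | h
      · obtain ⟨m, hm⟩ := exists_padicValNat_two_gt (by omega) h hik
        exact ⟨m, by omega, by omega, hik ▸ hm.2.2⟩
      · obtain ⟨m, hm⟩ := exists_padicValNat_two_gt (by omega) h hik.symm
        exact ⟨m, by omega, by omega, hm.2.2⟩
    exact absurd (hmax m (Finset.mem_Ico.2 ⟨by omega, by omega⟩)) (not_le.2 hm)
  refine ⟨padicValNat 2 k,
    List.count_eq_one_iff.2 ⟨_, _, by rw [hsplit, List.map_append, List.map_cons], ?_, ?_⟩⟩
  · simp only [List.mem_map, List.mem_range'_1]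
    rintro ⟨i, ⟨hi₁, hi₂⟩, hik⟩
    have := hunique i hi₁ (by omega) hik
    omega
  · simp only [List.mem_map, List.mem_range'_1]
    rintro ⟨i, ⟨hi₁, hi₂⟩, hik⟩
    have := hunique i (by omega) (by omega) hik
    omega

theorem isStrongCFCColoring_of_lt {V : Type*} [LinearOrder V] {G : SimpleGraph V}
    {c : Sym2 V → ℕ} (h : ∀ u v : V, u < v → ∃ p : G.Walk u v, p.IsPath ∧
      p.length = G.dist u v ∧ ∃ a : ℕ, (p.edges.map c).count a = 1) :
    IsStrongCFCColoring G c := by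
  intro u v huv
  rcases huv.lt_or_gt with huv | hvu
  · exact h u v huv
  · obtain ⟨p, hp, hlen, a, ha⟩ := h v u hvu
    refine ⟨p.reverse, hp.reverse, by rw [Walk.length_reverse, hlen, dist_comm], a, ?_⟩
    rw [Walk.edges_reverse, List.map_reverse, List.count_reverse, ha]

namespace SimpleGraph.pathGraph

variable {n : ℕ}

theorem le_add_length {u v : Fin n} (p : (pathGraph n).Walk u v) :
    (v : ℕ) ≤ u + p.length := by
  induction p with
  | nil => simp
  | cons h _ ih =>
    rw [pathGraph_adj] at h
    rw [Walk.length_cons]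
    omega

theorem exists_walk_length_eq {u v : Fin n} (huv : u ≤ v) :
    ∃ p : (pathGraph n).Walk u v, p.length = v - u := by
  induction hd : (v : ℕ) - u generalizing v with
  | zero =>
    obtain rfl : u = v := Fin.ext (by omega)
    exact ⟨Walk.nil, rfl⟩
  | succ d ih =>
    let w : Fin n := ⟨v - 1, by omega⟩
    have hwv : (pathGraph n).Adj w v := by rw [pathGraph_adj]; left; simp [w]; omega
    obtain ⟨p, hp⟩ := ih (v := w) (Fin.mk_le_mk.2 (by omega)) (by simp [w]; omega)
    exact ⟨p.concat hwv, by rw [Walk.length_concat, hp]⟩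

theorem dist_eq {u v : Fin n} (huv : u ≤ v) : (pathGraph n).dist u v = v - u := by
  obtain ⟨p, hp⟩ := exists_walk_length_eq huv
  obtain ⟨q, -, hq⟩ := (pathGraph_preconnected n u v).exists_path_of_dist
  have := le_add_length q
  have := dist_le p
  omega

theorem map_edges_of_add_length_eq {u v : Fin n} (p : (pathGraph n).Walk u v)
    (hp : u + p.length = (v : ℕ)) :
    p.edges.map (Sym2.map Fin.val) = (List.range' u p.length).map fun i => s(i, i + 1) := by
  induction p with
  | nil => rfl
  | @cons a w b h q ih =>
    have := le_add_length q
    rw [pathGraph_adj] at h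
    have hw : (w : ℕ) = a + 1 := by rw [Walk.length_cons] at hp; omega
    rw [Walk.edges_cons, List.map_cons, ih (by rw [Walk.length_cons] at hp; omega),
      Walk.length_cons, List.range'_succ, List.map_cons, Sym2.map_mk, hw]

theorem map_edges_of_length_eq_dist {α : Type*} {u v : Fin n} (huv : u ≤ v)
    (p : (pathGraph n).Walk u v) (hp : p.length = (pathGraph n).dist u v) (c : Sym2 ℕ → α) :
    p.edges.map (c ∘ Sym2.map Fin.val) = (List.range' u (v - u)).map fun i => c s(i, i + 1) := by
  rw [dist_eq huv] at hp
  rw [← List.map_map, map_edges_of_add_length_eq p (by omega), List.map_map, hp]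
  rfl

end SimpleGraph.pathGraph

def edgeValuation : Sym2 ℕ → ℕ :=
  Sym2.lift ⟨fun a b => padicValNat 2 (max a b),
    fun _ _ => congrArg (padicValNat 2) (max_comm _ _)⟩

theorem map_edgeValuation_range' (s n : ℕ) :
    (List.range' s n).map (fun i => edgeValuation s(i, i + 1)) =
      (List.range' (s + 1) n).map (padicValNat 2) := by
  induction n generalizing s with
  | zero => rfl
  | succ n ih =>
    rw [List.range'_succ, List.map_cons, ih, List.range'_succ, List.map_cons]
    simp [edgeValuation]

theorem edgeValuation_lt_clog {n : ℕ} :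
    ∀ e ∈ (pathGraph n).edgeSet, (edgeValuation ∘ Sym2.map Fin.val) e < Nat.clog 2 n := by
  rintro ⟨u, v⟩ huv
  rw [mem_edgeSet, pathGraph_adj] at huv
  set m := max (u : ℕ) v with hm
  have hpow : 2 ^ padicValNat 2 m < 2 ^ Nat.clog 2 n := calc
    2 ^ padicValNat 2 m ≤ m := Nat.le_of_dvd (by omega) pow_padicValNat_dvd
    _ < n := by omega
    _ ≤ 2 ^ Nat.clog 2 n := Nat.le_pow_clog one_lt_two n
  exact (Nat.pow_lt_pow_iff_right one_lt_two).1 hpow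

theorem isStrongCFCColoring_edgeValuation (n : ℕ) :
    IsStrongCFCColoring (pathGraph n) (edgeValuation ∘ Sym2.map Fin.val) := by
  refine isStrongCFCColoring_of_lt fun u v huv => ?_
  obtain ⟨p, hp, hlen⟩ := (pathGraph_preconnected n u v).exists_path_of_dist
  refine ⟨p, hp, hlen, ?_⟩
  rw [pathGraph.map_edges_of_length_eq_dist huv.le p hlen, map_edgeValuation_range']
  exact exists_count_map_padicValNat_two_range'_eq_one (by omega) (by omega)

theorem clog_le_of_isStrongCFCColoring {n k : ℕ} {c : Sym2 (Fin n) → ℕ}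
    (hc : ∀ e ∈ (pathGraph n).edgeSet, c e < k) (h : IsStrongCFCColoring (pathGraph n) c) :
    Nat.clog 2 n ≤ k := by
  -- `c` read on `Sym2 ℕ`, so that the edge `{i, i + 1}` can be named without bounds proofs
  set c' := Function.extend (Sym2.map Fin.val) c 0
  have hc' : c' ∘ Sym2.map Fin.val = c :=
    Function.extend_comp (Sym2.map.injective Fin.val_injective) c 0
  set L := (List.range' 0 (n - 1)).map fun i => c' s(i, i + 1)
  have hL : L.IsIntervalConflictFree := by
    intro m hm hne
    obtain ⟨l, hl, rfl⟩ := List.infix_map_iff.1 hm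
    obtain ⟨t, len, rfl, -, hlen⟩ := List.exists_eq_range'_of_infix hl
    have hpos : 0 < len := by simpa [Nat.pos_iff_ne_zero] using hne
    let u : Fin n := ⟨t, by omega⟩
    let v : Fin n := ⟨t + len, by omega⟩
    obtain ⟨p, -, hp, a, ha⟩ := h u v (by simp [u, v, Fin.ext_iff]; omega)
    rw [← hc', pathGraph.map_edges_of_length_eq_dist (Fin.mk_le_mk.2 (by omega)) p hp] at ha
    exact ⟨a, by simpa [u, v] using ha⟩
  have hcolors : L.toFinset ⊆ Finset.range k := by
    intro x hx
    simp only [L, List.mem_toFinset, List.mem_map, List.mem_range'_1] at hx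
    obtain ⟨i, hi, rfl⟩ := hx
    have := hc s(⟨i, by omega⟩, ⟨i + 1, by omega⟩) (by simp [pathGraph_adj])
    rw [← hc'] at this
    simpa using this
  have hlen := hL.length_lt_two_pow
  have hpow := Nat.pow_le_pow_right two_pos (Finset.card_le_card hcolors)
  simp only [L, List.length_map, List.length_range', Finset.card_range] at hlen hpow
  exact Nat.clog_le_of_le_pow (by omega)

theorem scfc_pathGraph_general (n : ℕ) :
    scfc (SimpleGraph.pathGraph n) = Nat.clog 2 n :=
  IsLeast.csInf_eq ⟨⟨_, edgeValuation_lt_clog, isStrongCFCColoring_edgeValuation n⟩,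
    fun _ ⟨_, hc, h⟩ => clog_le_of_isStrongCFCColoring hc h⟩

theorem scfc_pathGraph (n : ℕ) (hn : 1 ≤ n) :
    scfc (SimpleGraph.pathGraph n) = Nat.clog 2 n :=
  scfc_pathGraph_general n
end

section
/- For integers 1 ≤ s ≤ t, the strong conflict-free connection number of the complete bipartite graph K_{s,t} equals ⌈t^{1/s}⌉. -/
open SimpleGraph

/-!
Record an edge colouring `c` of `K_{s,t}` as the `t × s` matrix `M b a = c(ab)`. Two vertices on
the same side are at distance 2 and every geodesic between them has the form `a b a'` (resp.
`b a b'`), so `c` is strongly conflict-free exactly when `M` has pairwise distinct rows and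
pairwise distinct columns. Distinct rows with entries `< k` force `t ≤ k ^ s`. Conversely, if
`s ≤ t ≤ k ^ s`, take as rows `t` distinct vectors in `[0, k)^s` including the `s` vectors
`(k - 1) • e_a`; these already separate any two columns.
-/

theorem List.exists_count_pair_eq_one_iff {α : Type*} [DecidableEq α] {x y : α} :
    (∃ a, [x, y].count a = 1) ↔ x ≠ y := by
  refine ⟨?_, fun h => ⟨x, by simp [h.symm]⟩⟩
  rintro ⟨a, ha⟩ rfl
  by_cases hax : x = a <;> simp [hax] at ha

namespace SimpleGraph

variable {V : Type*} (G : SimpleGraph V) (c : Sym2 V → ℕ)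

def HasConflictFreeGeodesic (u v : V) : Prop :=
  ∃ p : G.Walk u v, p.IsPath ∧ p.length = G.dist u v ∧
    ∃ a : ℕ, (p.edges.map c).count a = 1

variable {G c} {u v w : V}

theorem scfc_le_of_isStrongCFCColoring {k : ℕ} (hk : ∀ e ∈ G.edgeSet, c e < k)
    (hc : IsStrongCFCColoring G c) : scfc G ≤ k :=
  Nat.sInf_le ⟨c, hk, hc⟩

theorem exists_isStrongCFCColoring_lt_scfc {k : ℕ} (hk : ∀ e ∈ G.edgeSet, c e < k)
    (hc : IsStrongCFCColoring G c) :
    ∃ c' : Sym2 V → ℕ, (∀ e ∈ G.edgeSet, c' e < scfc G) ∧ IsStrongCFCColoring G c' :=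
  Nat.sInf_mem
    (s := {m | ∃ c' : Sym2 V → ℕ, (∀ e ∈ G.edgeSet, c' e < m) ∧ IsStrongCFCColoring G c'})
    ⟨k, c, hk, hc⟩

theorem dist_eq_two_of_adj_of_adj (hne : u ≠ v) (hna : ¬G.Adj u v) (hu : G.Adj u w)
    (hv : G.Adj w v) : G.dist u v = 2 := by
  have h : G.edist u v = 2 := edist_eq_two_iff.2 ⟨hne, hna, w, hu, hv.symm⟩
  exact_mod_cast (Reachable.coe_dist_eq_edist ⟨hu.toWalk.concat hv⟩).trans h

theorem hasConflictFreeGeodesic_of_adj (h : G.Adj u v) : G.HasConflictFreeGeodesic c u v :=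
  ⟨h.toWalk, by simp [h.ne], by simp [dist_eq_one_iff_adj.2 h], c s(u, v), by simp⟩

theorem hasConflictFreeGeodesic_iff_of_dist_eq_two (h : G.dist u v = 2) :
    G.HasConflictFreeGeodesic c u v ↔ ∃ w, G.Adj u w ∧ G.Adj w v ∧ c s(u, w) ≠ c s(w, v) := by
  constructor
  · rintro ⟨p, -, hp, a, ha⟩
    rw [h] at hp
    cases p with
    | nil => simp at hp
    | cons hu q =>
      cases q with
      | nil => simp at hp
      | cons hv q =>
        cases q with
        | cons _ _ => simp at hp
        | nil => exact ⟨_, hu, hv, List.exists_count_pair_eq_one_iff.1 ⟨a, by simpa using ha⟩⟩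
  · rintro ⟨w, hu, hv, hc⟩
    have hne : u ≠ v := by rintro rfl; simp at h
    obtain ⟨a, ha⟩ := List.exists_count_pair_eq_one_iff.2 hc
    exact ⟨hu.toWalk.concat hv, by simp [Walk.isPath_def, hne, hu.ne, hv.ne], by simp [h], a,
      by simpa using ha⟩

variable {α β : Type*}

section CompleteBipartite

variable {c : Sym2 (α ⊕ β) → ℕ}

theorem completeBipartiteGraph_dist_inl_inl [Nonempty β] {a a' : α} (h : a ≠ a') :
    (completeBipartiteGraph α β).dist (.inl a) (.inl a') = 2 :=
  dist_eq_two_of_adj_of_adj (w := .inr (Classical.arbitrary β)) (by simpa) (by simp) (by simp)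
    (by simp)

theorem completeBipartiteGraph_dist_inr_inr [Nonempty α] {b b' : β} (h : b ≠ b') :
    (completeBipartiteGraph α β).dist (.inr b) (.inr b') = 2 :=
  dist_eq_two_of_adj_of_adj (w := .inl (Classical.arbitrary α)) (by simpa) (by simp) (by simp)
    (by simp)

theorem hasConflictFreeGeodesic_inl_inl_iff [Nonempty β] {a a' : α} (h : a ≠ a') :
    (completeBipartiteGraph α β).HasConflictFreeGeodesic c (.inl a) (.inl a') ↔
      ∃ b, c s(.inl a, .inr b) ≠ c s(.inl a', .inr b) := by
  rw [hasConflictFreeGeodesic_iff_of_dist_eq_two (completeBipartiteGraph_dist_inl_inl h)]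
  constructor
  · rintro ⟨_ | b, hu, -, hc⟩
    · simp at hu
    · exact ⟨b, by rwa [Sym2.eq_swap (a := (.inr b : α ⊕ β))] at hc⟩
  · rintro ⟨b, hb⟩
    exact ⟨.inr b, by simp, by simp, by rwa [Sym2.eq_swap (a := (.inr b : α ⊕ β))]⟩

theorem hasConflictFreeGeodesic_inr_inr_iff [Nonempty α] {b b' : β} (h : b ≠ b') :
    (completeBipartiteGraph α β).HasConflictFreeGeodesic c (.inr b) (.inr b') ↔
      ∃ a, c s(.inl a, .inr b) ≠ c s(.inl a, .inr b') := by
  rw [hasConflictFreeGeodesic_iff_of_dist_eq_two (completeBipartiteGraph_dist_inr_inr h)]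
  constructor
  · rintro ⟨a | _, -, hv, hc⟩
    · exact ⟨a, by rwa [Sym2.eq_swap (a := (.inr b : α ⊕ β))] at hc⟩
    · simp at hv
  · rintro ⟨a, ha⟩
    exact ⟨.inl a, by simp, by simp, by rwa [Sym2.eq_swap (a := (.inr b : α ⊕ β))]⟩

theorem isStrongCFCColoring_completeBipartiteGraph_iff [Nonempty α] [Nonempty β] :
    IsStrongCFCColoring (completeBipartiteGraph α β) c ↔
      (fun b a => c s(.inl a, .inr b)).Injective ∧ (fun a b => c s(.inl a, .inr b)).Injective := by
  constructor
  · intro h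
    refine ⟨fun b b' hbb' => ?_, fun a a' haa' => ?_⟩ <;> by_contra hne
    · obtain ⟨a, ha⟩ := (hasConflictFreeGeodesic_inr_inr_iff hne).1 (h _ _ (by simpa))
      exact ha (congrFun hbb' a)
    · obtain ⟨b, hb⟩ := (hasConflictFreeGeodesic_inl_inl_iff hne).1 (h _ _ (by simpa))
      exact hb (congrFun haa' b)
  · rintro ⟨hβ, hα⟩ (a | b) (a' | b') hne
    · have haa' : a ≠ a' := by simpa using hne
      exact (hasConflictFreeGeodesic_inl_inl_iff haa').2 (Function.ne_iff.1 (hα.ne haa'))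
    · exact hasConflictFreeGeodesic_of_adj (by simp)
    · exact hasConflictFreeGeodesic_of_adj (by simp)
    · have hbb' : b ≠ b' := by simpa using hne
      exact (hasConflictFreeGeodesic_inr_inr_iff hbb').2 (Function.ne_iff.1 (hβ.ne hbb'))

end CompleteBipartite

def bipartiteEdgeColoring (f : β → α → ℕ) : Sym2 (α ⊕ β) → ℕ :=
  Sym2.lift ⟨fun
    | .inl a, .inr b | .inr b, .inl a => f b a
    | _, _ => 0, by rintro (a | b) (a' | b') <;> rfl⟩

theorem bipartiteEdgeColoring_lt {f : β → α → ℕ} {k : ℕ} (hf : ∀ b a, f b a < k) :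
    ∀ e ∈ (completeBipartiteGraph α β).edgeSet, bipartiteEdgeColoring f e < k := by
  rintro ⟨a | b, a' | b'⟩ he <;> simp at he
  exacts [hf b' a, hf b a']

end SimpleGraph

section Counting

open Finset Fintype

variable {α β : Type*} [Fintype α] [Fintype β]

theorem Fintype.card_le_pow_of_injective {f : β → α → ℕ} {m : ℕ} (hf : f.Injective)
    (hm : ∀ b a, f b a < m) : card β ≤ m ^ card α := by
  classical
  calc card β = #(univ : Finset β) := rfl
    _ ≤ #(piFinset fun _ : α => range m) :=
      card_le_card_of_injOn f (by simpa [Set.MapsTo] using hm) hf.injOn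
    _ = m ^ card α := by simp

theorem exists_injective_injective_swap_of_card_le_pow {k : ℕ} (hαβ : card α ≤ card β)
    (hβ : card β ≤ k ^ card α) :
    ∃ f : β → α → ℕ, (∀ b a, f b a < k) ∧ f.Injective ∧ (Function.swap f).Injective := by
  classical
  have hk_pos (a : α) : 0 < k := by
    have hα := card_pos_iff.2 ⟨a⟩
    refine Nat.pos_of_ne_zero fun hk => ?_
    rw [hk, zero_pow hα.ne'] at hβ
    omega
  have hk_two (a a' : α) (h : a ≠ a') : 1 < k := by
    have := one_lt_card_iff.2 ⟨a, a', h⟩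
    by_contra! hk
    have := pow_le_one₀ (n := card α) k.zero_le hk
    omega
  set δ : α → α → ℕ := fun a => Pi.single a (k - 1)
  have hδ_mem : univ.image δ ⊆ piFinset fun _ => range k := by
    simp only [subset_iff, mem_image, mem_univ, true_and, mem_piFinset, mem_range]
    rintro _ ⟨a, rfl⟩ a'
    have := hk_pos a
    rcases eq_or_ne a' a with rfl | h <;> simp [δ, *]
  obtain ⟨T, hδT, hT, hTcard⟩ := exists_subsuperset_card_eq hδ_mem (card_image_le.trans hαβ)
    (by simpa)
  let e : β ≃ T := equivOfCardEq (by simp [hTcard])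
  refine ⟨fun b => e b, fun b a => by simpa using mem_piFinset.1 (hT (e b).2) a,
    fun b b' h => e.injective (Subtype.ext h), fun a a' h => by_contra fun hne => ?_⟩
  have hδa : δ a ∈ T := hδT (mem_image_of_mem δ (mem_univ a))
  have hcol := congrFun h (e.symm ⟨δ a, hδa⟩)
  simp only [Function.swap, Equiv.apply_symm_apply, δ, Pi.single_eq_same,
    Pi.single_eq_of_ne (Ne.symm hne)] at hcol
  have := hk_two a a' hne
  omega

end Counting

theorem scfc_completeBipartiteGraph (s t : ℕ) (hs : 1 ≤ s) (hst : s ≤ t) :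
    scfc (completeBipartiteGraph (Fin s) (Fin t)) = sInf {k : ℕ | t ≤ k ^ s} := by
  have : Nonempty (Fin s) := ⟨⟨0, hs⟩⟩
  have : Nonempty (Fin t) := ⟨⟨0, Nat.lt_of_lt_of_le hs hst⟩⟩
  set k := sInf {k : ℕ | t ≤ k ^ s}
  have hk : k ∈ {k : ℕ | t ≤ k ^ s} := Nat.sInf_mem ⟨t, Nat.le_self_pow (n := s) (by omega) t⟩
  obtain ⟨f, hf_lt, hf_rows, hf_cols⟩ :=
    exists_injective_injective_swap_of_card_le_pow (α := Fin s) (β := Fin t) (k := k)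
      (by simpa) (by simpa)
  have hk_bound := bipartiteEdgeColoring_lt hf_lt
  have hf_coloring : IsStrongCFCColoring _ (bipartiteEdgeColoring f) :=
    isStrongCFCColoring_completeBipartiteGraph_iff.2 ⟨hf_rows, hf_cols⟩
  refine le_antisymm (scfc_le_of_isStrongCFCColoring hk_bound hf_coloring) ?_
  obtain ⟨c, hc_lt, hc⟩ := exists_isStrongCFCColoring_lt_scfc hk_bound hf_coloring
  have := Fintype.card_le_pow_of_injective
    (isStrongCFCColoring_completeBipartiteGraph_iff.1 hc).1 fun b a => hc_lt _ (by simp)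
  exact Nat.sInf_le (by simpa using this)
end

section
/- For the cycle C_n on n ≥ 3 vertices, scfc(C_n) ≤ ⌈log₂ n⌉. -/
/-!
Let `k = ⌈log₂ n⌉` and `m = ⌈n/2⌉ ≤ 2^(k-1)`. Cut `C_n` at the vertices `0` and `m` into two
paths and color the `j`-th edge of each path (counting from `0`) by `k - 1` if `j = 0` and by
`ν₂(j) < k - 1` otherwise (the ruler sequence). A shortest path has at most `⌊n/2⌋` edges, so
it either contains exactly one of the two edges of color `k - 1`, or it runs inside one of the
two paths; there its colors are `ν₂` of consecutive positive integers, which have a unique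
maximum because two integers of the same maximal valuation `v` would enclose a multiple of
`2^(v+1)`.
-/

open SimpleGraph Fin.NatCast Fin.CommRing

def HasUniqueMaxBelow (f : ℕ → ℕ) (ℓ : ℕ) : Prop :=
  ∃ t₀ < ℓ, ∀ t < ℓ, t ≠ t₀ → f t < f t₀

namespace HasUniqueMaxBelow

variable {f g : ℕ → ℕ} {ℓ : ℕ}

theorem congr (h : HasUniqueMaxBelow f ℓ) (hfg : ∀ t < ℓ, f t = g t) :
    HasUniqueMaxBelow g ℓ := by
  obtain ⟨t₀, ht₀, hmax⟩ := h
  exact ⟨t₀, ht₀, fun t ht hne => hfg t ht ▸ hfg t₀ ht₀ ▸ hmax t ht hne⟩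

theorem exists_count_eq_one (h : HasUniqueMaxBelow f ℓ) :
    ∃ a, ((List.range ℓ).map f).count a = 1 := by
  obtain ⟨t₀, ht₀, hmax⟩ := h
  refine ⟨f t₀, ?_⟩
  have hfiber : ∀ t ∈ List.range ℓ, (f t == f t₀) = (t == t₀) := by
    intro t ht
    rw [List.mem_range] at ht
    by_cases htt₀ : t = t₀
    · simp [htt₀]
    · simp [htt₀, (hmax t ht htt₀).ne]
  rw [List.count_eq_countP, List.countP_map, Function.comp_def,
    List.countP_congr (fun t ht => by rw [hfiber t ht]), ← List.count_eq_countP]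
  exact List.count_eq_one_of_mem List.nodup_range (List.mem_range.mpr ht₀)

end HasUniqueMaxBelow

theorem exists_mem_Icc_two_mul_dvd {d x y : ℕ} (hxy : x < y) (hx : d ∣ x) (hy : d ∣ y) :
    ∃ z ∈ Set.Icc x y, 2 * d ∣ z := by
  obtain ⟨s, rfl⟩ := hx
  obtain ⟨t, rfl⟩ := hy
  have hst : s < t := lt_of_mul_lt_mul_left hxy (Nat.zero_le d)
  rcases Nat.even_or_odd s with ⟨r, hr⟩ | ⟨r, hr⟩
  · exact ⟨d * s, ⟨le_rfl, hxy.le⟩, ⟨r, by rw [hr]; ring⟩⟩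
  · exact ⟨d * (s + 1), ⟨Nat.mul_le_mul_left d s.le_succ, Nat.mul_le_mul_left d hst⟩,
      ⟨r + 1, by rw [hr]; ring⟩⟩

theorem hasUniqueMaxBelow_padicValNat_two {a ℓ : ℕ} (ha : 0 < a) (hℓ : 0 < ℓ) :
    HasUniqueMaxBelow (fun t => padicValNat 2 (a + t)) ℓ := by
  obtain ⟨t₀, ht₀, hmax⟩ := (Finset.range ℓ).exists_max_image (fun t => padicValNat 2 (a + t))
    ⟨0, Finset.mem_range.mpr hℓ⟩
  rw [Finset.mem_range] at ht₀
  refine ⟨t₀, ht₀, fun t ht hne => lt_of_le_of_ne (hmax t (Finset.mem_range.mpr ht)) ?_⟩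
  intro heq
  set v := padicValNat 2 (a + t₀)
  have hdvd : ∀ s, padicValNat 2 (a + s) = v → 2 ^ v ∣ a + s := fun s hs =>
    hs ▸ pow_padicValNat_dvd
  suffices ∀ s₁ < ℓ, ∀ s₂ < ℓ, s₁ < s₂ → 2 ^ v ∣ a + s₁ → 2 ^ v ∣ a + s₂ → False by
    rcases lt_or_gt_of_ne hne with h | h
    · exact this t ht t₀ ht₀ h (hdvd t heq) (hdvd t₀ rfl)
    · exact this t₀ ht₀ t ht h (hdvd t₀ rfl) (hdvd t heq)
  intro s₁ hs₁ s₂ hs₂ hs h₁ h₂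
  obtain ⟨z, ⟨hz₁, hz₂⟩, hz⟩ := exists_mem_Icc_two_mul_dvd (by omega) h₁ h₂
  rw [← pow_succ', padicValNat_dvd_iff_le (by omega)] at hz
  have hz_le := hmax (z - a) (Finset.mem_range.mpr (by omega))
  rw [Nat.add_sub_cancel' (by omega)] at hz_le
  omega

theorem padicValNat_two_lt_of_lt_pow {x m : ℕ} (hx : 0 < x) (hxm : x < 2 ^ m) :
    padicValNat 2 x < m :=
  (padicValNat_le_nat_log x).trans_lt (Nat.log_lt_of_lt_pow hx.ne' hxm)

theorem mod_cases_of_lt_two_mul {x M : ℕ} (h : x < 2 * M) :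
    x < M ∧ x % M = x ∨ M ≤ x ∧ x % M = x - M := by
  rcases lt_or_ge x M with hx | hx
  · exact Or.inl ⟨hx, Nat.mod_eq_of_lt hx⟩
  · exact Or.inr ⟨hx, by rw [Nat.mod_eq_sub_mod hx, Nat.mod_eq_of_lt (by omega)]⟩

/-- The color of the edge `{i, i + 1}`: it is the `(i % ⌈n/2⌉)`-th edge of its path. -/
def cycleRulerColor (n i : ℕ) : ℕ :=
  if i % ((n + 1) / 2) = 0 then Nat.clog 2 n - 1 else padicValNat 2 (i % ((n + 1) / 2))

section cycleRulerColor

variable {n : ℕ}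

theorem cycleRulerColor_lt_of_mod_ne_zero (hn : 2 ≤ n) {i : ℕ} (hi : i % ((n + 1) / 2) ≠ 0) :
    cycleRulerColor n i < Nat.clog 2 n - 1 := by
  rw [cycleRulerColor, if_neg hi]
  apply padicValNat_two_lt_of_lt_pow (Nat.pos_of_ne_zero hi)
  have hclog := Nat.clog_pos one_lt_two hn
  have hpow : n ≤ 2 * 2 ^ (Nat.clog 2 n - 1) := by
    rw [← pow_succ', Nat.sub_add_cancel hclog]
    exact Nat.le_pow_clog one_lt_two n
  have := Nat.mod_lt i (show 0 < (n + 1) / 2 by omega)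
  omega

theorem cycleRulerColor_lt (hn : 2 ≤ n) (i : ℕ) : cycleRulerColor n i < Nat.clog 2 n := by
  have hclog := Nat.clog_pos one_lt_two hn
  by_cases hi : i % ((n + 1) / 2) = 0
  · rw [cycleRulerColor, if_pos hi]
    omega
  · have := cycleRulerColor_lt_of_mod_ne_zero hn hi
    omega

theorem add_mod_mod_eq_of_forall_ne_zero {st ℓ : ℕ} (hst : st < n)
    (h : ∀ t < ℓ, (st + t) % n % ((n + 1) / 2) ≠ 0) {t : ℕ} (ht : t < ℓ) :
    (st + t) % n % ((n + 1) / 2) = st % ((n + 1) / 2) + t := by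
  have hwrap : st + t < n := by
    by_contra hge
    simpa [Nat.add_sub_cancel' hst.le] using h (n - st) (by omega)
  have hcross : st < (n + 1) / 2 → st + t < (n + 1) / 2 := by
    intro hlt
    by_contra hge
    have hhalf : (n + 1) / 2 < n := by omega
    simpa [Nat.add_sub_cancel' hlt.le, Nat.mod_eq_of_lt hhalf] using
      h ((n + 1) / 2 - st) (by omega)
  rw [Nat.mod_eq_of_lt hwrap]
  have := mod_cases_of_lt_two_mul (x := st) (M := (n + 1) / 2) (by omega)
  have := mod_cases_of_lt_two_mul (x := st + t) (M := (n + 1) / 2) (by omega)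
  omega

theorem hasUniqueMaxBelow_cycleRulerColor (hn : 2 ≤ n) {st ℓ : ℕ} (hst : st < n) (hℓ : 0 < ℓ)
    (hℓn : 2 * ℓ ≤ n) : HasUniqueMaxBelow (fun t => cycleRulerColor n ((st + t) % n)) ℓ := by
  by_cases hcut : ∃ t₀ < ℓ, (st + t₀) % n % ((n + 1) / 2) = 0
  · obtain ⟨t₀, ht₀, h₀⟩ := hcut
    refine ⟨t₀, ht₀, fun t ht hne => ?_⟩
    -- the cut vertices `0` and `⌈n/2⌉` are at cyclic distance `⌊n/2⌋ ≥ ℓ`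
    have hmod : (st + t) % n % ((n + 1) / 2) ≠ 0 := by
      have hlt : ∀ x, x % n < 2 * ((n + 1) / 2) := fun x =>
        (Nat.mod_lt x (by omega)).trans_le (by omega)
      have := mod_cases_of_lt_two_mul (x := st + t) (M := n) (by omega)
      have := mod_cases_of_lt_two_mul (x := st + t₀) (M := n) (by omega)
      have := mod_cases_of_lt_two_mul (hlt (st + t))
      have := mod_cases_of_lt_two_mul (hlt (st + t₀))
      omega
    have htop : cycleRulerColor n ((st + t₀) % n) = Nat.clog 2 n - 1 := if_pos h₀
    simpa only [htop] using cycleRulerColor_lt_of_mod_ne_zero hn hmod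
  · push Not at hcut
    refine (hasUniqueMaxBelow_padicValNat_two (a := st % ((n + 1) / 2)) ?_ hℓ).congr
      fun t ht => ?_
    · have := add_mod_mod_eq_of_forall_ne_zero hst hcut hℓ
      have := hcut 0 hℓ
      omega
    · have hne := hcut t ht
      rw [add_mod_mod_eq_of_forall_ne_zero hst hcut ht] at hne
      rw [cycleRulerColor, add_mod_mod_eq_of_forall_ne_zero hst hcut ht, if_neg hne]

end cycleRulerColor

theorem Fin.val_add_val_neg {n : ℕ} [NeZero n] {x : Fin n} (hx : x ≠ 0) :
    x.val + (-x).val = n := by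
  have : x.val ≠ 0 := Fin.val_ne_iff.mpr hx
  rw [Fin.val_neg', Nat.mod_eq_of_lt (by omega)]
  omega

theorem Fin.min_val_val_neg_add_one_le {n : ℕ} (x : Fin (n + 1)) :
    min (x + 1).val (-(x + 1)).val ≤ min x.val (-x).val + 1 := by
  rw [Fin.val_add_one]
  split_ifs with hx
  · simp
  · by_cases hx0 : x = 0
    · simp [hx0]
    · have hx1 : x + 1 ≠ 0 := fun h => by
        simpa [Fin.val_add_one, hx] using congrArg Fin.val h
      have := Fin.val_add_val_neg hx0
      have := Fin.val_add_val_neg hx1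
      rw [Fin.val_add_one, if_neg hx] at this
      omega

namespace SimpleGraph

variable {n : ℕ}

theorem cycleGraph_adj_add_one (u : Fin (n + 2)) : (cycleGraph (n + 2)).Adj u (u + 1) :=
  cycleGraph_adj.mpr (Or.inr (add_sub_cancel_left u 1))

def cycleGraph.arc : (u : Fin (n + 2)) → (k : ℕ) → (cycleGraph (n + 2)).Walk u (u + k)
  | _, 0 => Walk.nil.copy rfl (by simp)
  | u, k + 1 => (Walk.cons (cycleGraph_adj_add_one u) (arc (u + 1) k)).copy rfl
      (by push_cast; ring)

namespace cycleGraph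

@[simp]
theorem length_arc (u : Fin (n + 2)) (k : ℕ) : (arc u k).length = k := by
  induction k generalizing u with
  | zero => simp [arc]
  | succ k ih => simp [arc, ih]

theorem support_arc (u : Fin (n + 2)) (k : ℕ) :
    (arc u k).support = (List.range (k + 1)).map fun t : ℕ => u + (t : Fin (n + 2)) := by
  induction k generalizing u with
  | zero => simp [arc]
  | succ k ih =>
    rw [arc, Walk.support_copy, Walk.support_cons, ih, List.range_succ_eq_map (n := k + 1),
      List.map_cons, List.map_map, Nat.cast_zero, add_zero]
    congr 1
    refine List.map_congr_left fun t _ => ?_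
    simp only [Function.comp_apply, Nat.cast_succ]
    ring

theorem edges_arc (u : Fin (n + 2)) (k : ℕ) :
    (arc u k).edges = (List.range k).map fun t : ℕ => s(u + (t : Fin (n + 2)), u + t + 1) := by
  induction k generalizing u with
  | zero => simp [arc]
  | succ k ih =>
    rw [arc, Walk.edges_copy, Walk.edges_cons, ih, List.range_succ_eq_map, List.map_cons,
      List.map_map, Nat.cast_zero, add_zero]
    congr 1
    refine List.map_congr_left fun t _ => ?_
    simp only [Function.comp_apply, Nat.cast_succ, add_assoc, add_comm (1 : Fin (n + 2))]

theorem isPath_arc (u : Fin (n + 2)) {k : ℕ} (hk : k < n + 2) : (arc u k).IsPath := by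
  rw [Walk.isPath_def, support_arc]
  refine List.nodup_range.map_on fun t₁ ht₁ t₂ ht₂ h => ?_
  rw [List.mem_range] at ht₁ ht₂
  simpa [Fin.val_natCast, Nat.mod_eq_of_lt, ht₁.trans_le hk, ht₂.trans_le hk] using
    congrArg Fin.val (add_left_cancel h)

theorem min_val_sub_le_length {u v : Fin (n + 2)} (p : (cycleGraph (n + 2)).Walk u v) :
    min (v - u).val (u - v).val ≤ p.length := by
  induction p with
  | nil => simp
  | @cons a b c hab q ih =>
    rw [Walk.length_cons]
    rcases cycleGraph_adj.mp hab with h | h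
    · have := Fin.min_val_val_neg_add_one_le (b - c)
      rw [show b - c + 1 = a - c by rw [← h]; ring, neg_sub, neg_sub] at this
      omega
    · have := Fin.min_val_val_neg_add_one_le (c - b)
      rw [show c - b + 1 = c - a by rw [← h]; ring, neg_sub, neg_sub] at this
      omega

theorem dist_le_val_sub (u v : Fin (n + 2)) : (cycleGraph (n + 2)).dist u v ≤ (v - u).val := by
  simpa using dist_le ((arc u (v - u).val).copy rfl (by simp : u + ((v - u).val : Fin _) = v))

end cycleGraph

theorem cycleGraph_dist (u v : Fin (n + 2)) :
    (cycleGraph (n + 2)).dist u v = min (v - u).val (u - v).val := by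
  refine le_antisymm ?_ ?_
  · exact le_min (cycleGraph.dist_le_val_sub u v) (dist_comm ▸ cycleGraph.dist_le_val_sub v u)
  · obtain ⟨p, hp⟩ := cycleGraph_connected.exists_walk_length_eq_dist u v
    exact hp ▸ cycleGraph.min_val_sub_le_length p

end SimpleGraph

section cycleEdgeColoring

variable {n : ℕ}

/-- The edge `{x, x + 1}` gets the color `c x`; the `max` makes the definition symmetric, and for
`n ≥ 3` one of its two arguments is `0`. -/
def cycleEdgeColoring [NeZero n] (c : Fin n → ℕ) : Sym2 (Fin n) → ℕ :=
  Sym2.lift ⟨fun a b => max (if b = a + 1 then c a else 0) (if a = b + 1 then c b else 0),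
    fun _ _ => max_comm _ _⟩

theorem cycleEdgeColoring_mk_add_one (c : Fin (n + 3) → ℕ) (x : Fin (n + 3)) :
    cycleEdgeColoring c s(x, x + 1) = c x := by
  have hx : x ≠ x + 1 + 1 := by
    rw [ne_eq, add_assoc, left_eq_add, Fin.ext_iff, Fin.val_add, Fin.val_one, Fin.val_zero,
      Nat.mod_eq_of_lt (by omega)]
    omega
  simp [cycleEdgeColoring, hx]

theorem cycleEdgeColoring_lt [NeZero n] {c : Fin n → ℕ} {k : ℕ} (hk : 0 < k)
    (hc : ∀ x, c x < k) (e : Sym2 (Fin n)) : cycleEdgeColoring c e < k := by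
  induction e using Sym2.ind with
  | _ a b =>
    simp only [cycleEdgeColoring, Sym2.lift_mk]
    split_ifs <;> simp [hk, hc]

theorem map_cycleEdgeColoring_edges_arc (c : Fin (n + 3) → ℕ) (u : Fin (n + 3)) (k : ℕ) :
    (cycleGraph.arc u k).edges.map (cycleEdgeColoring c)
      = (List.range k).map fun t : ℕ => c (u + t) := by
  simp [cycleGraph.edges_arc, Function.comp_def, cycleEdgeColoring_mk_add_one]

theorem isStrongCFCColoring_cycleEdgeColoring (c : Fin (n + 3) → ℕ)
    (hc : ∀ (u : Fin (n + 3)) (ℓ : ℕ), 0 < ℓ → 2 * ℓ ≤ n + 3 →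
      HasUniqueMaxBelow (fun t : ℕ => c (u + t)) ℓ) :
    IsStrongCFCColoring (cycleGraph (n + 3)) (cycleEdgeColoring c) := by
  have hforward : ∀ u v : Fin (n + 3), u ≠ v → (v - u).val ≤ (u - v).val →
      ∃ p : (cycleGraph (n + 3)).Walk u v, p.IsPath ∧ p.length = (cycleGraph (n + 3)).dist u v ∧
        ∃ a : ℕ, (p.edges.map (cycleEdgeColoring c)).count a = 1 := by
    intro u v huv hle
    have hvu : v - u ≠ 0 := sub_ne_zero.mpr huv.symm
    have hsum := Fin.val_add_val_neg hvu
    rw [neg_sub] at hsum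
    have hpos : (v - u).val ≠ 0 := Fin.val_ne_iff.mpr hvu
    refine ⟨(cycleGraph.arc u (v - u).val).copy rfl (by simp), ?_, ?_, ?_⟩
    · exact (Walk.isPath_copy _ _ _).mpr (cycleGraph.isPath_arc u (v - u).isLt)
    · simp [cycleGraph_dist, hle]
    · rw [Walk.edges_copy, map_cycleEdgeColoring_edges_arc]
      exact (hc u _ (by omega) (by omega)).exists_count_eq_one
  intro u v huv
  rcases le_total (v - u).val (u - v).val with h | h
  · exact hforward u v huv h
  · obtain ⟨p, hp, hlen, a, ha⟩ := hforward v u huv.symm h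
    refine ⟨p.reverse, hp.reverse, by rw [Walk.length_reverse, hlen, dist_comm], a, ?_⟩
    rwa [Walk.edges_reverse, List.map_reverse, List.count_reverse]

end cycleEdgeColoring

theorem scfc_cycleGraph_le (n : ℕ) (hn : 3 ≤ n) :
    scfc (SimpleGraph.cycleGraph n) ≤ Nat.clog 2 n := by
  obtain ⟨n, rfl⟩ : ∃ m, n = m + 3 := ⟨n - 3, by omega⟩
  have hclog := Nat.clog_pos one_lt_two (show 1 < n + 3 by omega)
  refine Nat.sInf_le ⟨cycleEdgeColoring fun x => cycleRulerColor (n + 3) x.val,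
    fun e _ => cycleEdgeColoring_lt hclog (fun x => cycleRulerColor_lt (by omega) _) e,
    isStrongCFCColoring_cycleEdgeColoring _ fun u ℓ hℓ hℓn => ?_⟩
  refine (hasUniqueMaxBelow_cycleRulerColor (by omega) u.isLt hℓ hℓn).congr fun t _ => ?_
  rw [Fin.val_add, Fin.val_natCast, Nat.add_mod_mod]
end

section
/- For the cycle C_n on n ≥ 3 vertices, scfc(C_n) ≥ ⌈log₂ n⌉ − 1. -/
/-!
In a strong conflict-free colouring of `C_n`, two vertices at distance `d < n / 2` are joined by a
unique shortest path, the arc between them. Hence every nonempty factor of the colour word read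
along the arc `0, 1, …, ⌊(n - 1) / 2⌋` has a colour occurring exactly once in it. A word with this
property over `k` colours has length `< 2 ^ k`: cutting it at a colour that occurs once leaves two
such words over `k - 1` colours. So `⌊(n - 1) / 2⌋ < 2 ^ scfc`, i.e. `n ≤ 2 ^ (scfc + 1)`.
-/

open SimpleGraph

namespace List

theorem IsInfix.exists_eq_range' {l : List ℕ} {s m : ℕ} (h : l <:+: range' s m) :
    ∃ i d, s ≤ i ∧ i + d ≤ s + m ∧ l = range' i d := by
  obtain ⟨a, b, hab⟩ := h
  obtain ⟨k, hk, hal, -⟩ := range'_eq_append_iff.mp hab.symm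
  obtain ⟨j, hj, -, rfl⟩ := range'_eq_append_iff.mp hal.symm
  exact ⟨s + j, k - j, by omega, by omega, by simp⟩

variable {α : Type*} [DecidableEq α]

theorem length_lt_two_pow_card_toFinset_of_forall_infix (l : List α)
    (h : ∀ w, w <:+: l → w ≠ [] → ∃ a, w.count a = 1) :
    l.length < 2 ^ l.toFinset.card := by
  induction hL : l.length using Nat.strong_induction_on generalizing l with
  | _ L ih =>
  subst hL
  rcases eq_or_ne l [] with rfl | hne
  · simp
  obtain ⟨a, ha⟩ := h l (infix_refl l) hne
  obtain ⟨s, t, rfl⟩ := append_of_mem (count_pos_iff.mp (by omega) : a ∈ l)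
  have hst : a ∉ s ∧ a ∉ t := by
    simp only [count_append, count_cons_self] at ha
    exact ⟨count_eq_zero.mp (by omega), count_eq_zero.mp (by omega)⟩
  have hpow : ∀ r, r <:+: s ++ a :: t → a ∉ r →
      2 * 2 ^ r.toFinset.card ≤ 2 ^ (s ++ a :: t).toFinset.card := by
    intro r hr har
    rw [← pow_succ']
    refine Nat.pow_le_pow_right two_pos (Finset.card_lt_card ?_)
    exact Finset.ssubset_iff.mpr ⟨a, by simpa using har, Finset.insert_subset (by simp)
      fun x hx => mem_toFinset.mpr (hr.subset (mem_toFinset.mp hx))⟩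
  have hs : s <:+: s ++ a :: t := (prefix_append s (a :: t)).isInfix
  have ht : t <:+: s ++ a :: t := ((suffix_cons a t).trans (suffix_append s (a :: t))).isInfix
  have := ih s.length (by simp) s (fun w hw => h w (hw.trans hs)) rfl
  have := ih t.length (by simp; omega) t (fun w hw => h w (hw.trans ht)) rfl
  have := hpow s hs hst.1
  have := hpow t ht hst.2
  simp only [length_append, length_cons]
  omega

end List

theorem IsStrongCFCColoring.of_injective {V : Type*} {G : SimpleGraph V} (hG : G.Connected)
    {c : Sym2 V → ℕ} (hc : Function.Injective c) : IsStrongCFCColoring G c := by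
  classical
  intro u v huv
  obtain ⟨p, hp, hlen⟩ := hG.exists_path_of_dist u v
  have hne : p.edges ≠ [] := by
    simpa [← List.length_eq_zero_iff, Walk.length_edges] using mt Walk.eq_of_length_eq_zero huv
  refine ⟨p, hp, hlen, c (p.edges.head hne), ?_⟩
  rw [List.count_map_of_injective _ _ hc]
  exact List.count_eq_one_of_mem hp.isTrail.edges_nodup (List.head_mem hne)

theorem exists_isStrongCFCColoring_lt_scfc {V : Type*} [Finite V] {G : SimpleGraph V}
    (hG : G.Connected) :
    ∃ c : Sym2 V → ℕ, (∀ e ∈ G.edgeSet, c e < scfc G) ∧ IsStrongCFCColoring G c := by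
  obtain ⟨N, ⟨f⟩⟩ := Finite.exists_equiv_fin (Sym2 V)
  have hne :
      {k | ∃ c : Sym2 V → ℕ, (∀ e ∈ G.edgeSet, c e < k) ∧ IsStrongCFCColoring G c}.Nonempty :=
    ⟨N, fun e => f e, fun e _ => (f e).isLt,
      .of_injective hG (Fin.val_injective.comp f.injective)⟩
  exact Nat.sInf_mem hne

section Cycle

open scoped Fin.NatCast Fin.CommRing

theorem Fin.add_natCast_eq_self_iff {m : ℕ} [NeZero m] {u : Fin m} {d : ℕ} (hd : d < m) :
    u + (d : Fin m) = u ↔ d = 0 := by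
  rw [add_eq_left, Fin.natCast_eq_zero]
  exact ⟨fun h => Nat.eq_zero_of_dvd_of_lt h hd, fun h => h ▸ dvd_zero _⟩

namespace SimpleGraph

variable {n : ℕ}

theorem cycleGraph_adj_iff_eq_add_one {u v : Fin (n + 2)} :
    (cycleGraph (n + 2)).Adj u v ↔ v = u + 1 ∨ u = v + 1 := by
  rw [cycleGraph_adj, sub_eq_iff_eq_add', sub_eq_iff_eq_add', or_comm]

theorem cycleGraph_dist_add_natCast_le (u : Fin (n + 2)) (d : ℕ) :
    (cycleGraph (n + 2)).dist u (u + (d : Fin (n + 2))) ≤ d := by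
  induction d with
  | zero => simp
  | succ d ih =>
    have hadj : (cycleGraph (n + 2)).Adj (u + d) (u + (d + 1 : ℕ)) :=
      cycleGraph_adj_iff_eq_add_one.mpr (Or.inl (by push_cast; ring))
    calc (cycleGraph (n + 2)).dist u (u + (d + 1 : ℕ))
        ≤ (cycleGraph (n + 2)).dist u (u + d) +
            (cycleGraph (n + 2)).dist (u + d) (u + (d + 1 : ℕ)) :=
          (cycleGraph_connected (n := n + 1)).dist_triangle
      _ ≤ d + 1 := by rw [dist_eq_one_iff_adj.mpr hadj]; omega

namespace Walk

theorem exists_add_eq_add_of_cycleGraph {u v : Fin (n + 2)} (p : (cycleGraph (n + 2)).Walk u v) :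
    ∃ a b : ℕ, a + b = p.length ∧ u + (a : Fin (n + 2)) = v + b := by
  induction p with
  | nil => exact ⟨0, 0, rfl, rfl⟩
  | cons h q ih =>
    obtain ⟨a, b, hab, hq⟩ := ih
    rcases cycleGraph_adj_iff_eq_add_one.mp h with rfl | rfl
    · exact ⟨a + 1, b, by rw [length_cons]; omega, by push_cast; linear_combination hq⟩
    · exact ⟨a, b + 1, by rw [length_cons]; omega, by push_cast; linear_combination hq⟩

theorem min_le_length_of_cycleGraph {u v : Fin (n + 2)} (p : (cycleGraph (n + 2)).Walk u v)
    {k : ℕ} (hv : v = u + (k : Fin (n + 2))) (hk : k < n + 2) :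
    min k (n + 2 - k) ≤ p.length := by
  obtain ⟨a, b, hab, h⟩ := p.exists_add_eq_add_of_cycleGraph
  rw [hv, add_assoc, add_right_inj, ← Nat.cast_add, Fin.ext_iff] at h
  replace h : a ≡ k + b [MOD n + 2] := by rwa [Fin.val_natCast, Fin.val_natCast] at h
  rcases le_or_gt k a with hka | hak
  · omega
  · have := Nat.le_of_dvd (by omega) ((Nat.modEq_iff_dvd' (by omega)).mp h)
    omega

theorem edges_eq_of_cycleGraph_of_length_le {u v : Fin (n + 2)}
    (p : (cycleGraph (n + 2)).Walk u v) {d : ℕ}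
    (hv : v = u + (d : Fin (n + 2))) (hd : 2 * d < n + 2) (hp : p.length ≤ d) :
    p.edges = (List.range d).map fun t : ℕ => s(u + (t : Fin (n + 2)), u + t + 1) := by
  induction p generalizing d with
  | nil =>
    obtain rfl : d = 0 := (Fin.add_natCast_eq_self_iff (by omega)).mp hv.symm
    rfl
  | @cons u w v h q ih =>
    obtain ⟨d, rfl⟩ : ∃ d', d = d' + 1 := ⟨d - 1, by rw [length_cons] at hp; omega⟩
    rw [length_cons] at hp
    rcases cycleGraph_adj_iff_eq_add_one.mp h with rfl | rfl
    · rw [edges_cons, ih (by rw [hv]; push_cast; ring) (by omega) (by omega),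
        List.range_succ_eq_map, List.map_cons, List.map_map]
      congr 1
      · simp
      · refine List.map_congr_left fun t _ => ?_
        simp only [Function.comp_apply, Nat.cast_succ]
        ring_nf
    -- after a backward first step, `d` steps remain to cover a displacement of `d + 2`
    · have := q.min_le_length_of_cycleGraph (k := d + 2) (by rw [hv]; push_cast; ring) (by omega)
      omega

end Walk

end SimpleGraph

variable {n : ℕ} {c : Sym2 (Fin (n + 2)) → ℕ}

theorem IsStrongCFCColoring.exists_count_eq_one_of_infix_cycleGraph
    (hc : IsStrongCFCColoring (cycleGraph (n + 2)) c)
    {m : ℕ} (hm : 2 * m < n + 2) (w : List ℕ)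
    (hw : w <:+: (List.range m).map fun t : ℕ => c s((t : Fin (n + 2)), t + 1)) (hne : w ≠ []) :
    ∃ a, w.count a = 1 := by
  obtain ⟨l, hl, rfl⟩ := List.infix_map_iff.mp hw
  rw [List.range_eq_range'] at hl
  obtain ⟨i, d, -, hid, rfl⟩ := hl.exists_eq_range'
  have hd : d ≠ 0 := by rintro rfl; simp at hne
  have huv : (i : Fin (n + 2)) ≠ i + (d : Fin (n + 2)) :=
    fun h => hd ((Fin.add_natCast_eq_self_iff (by omega)).mp h.symm)
  obtain ⟨p, -, hlen, a, ha⟩ := hc _ _ huv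
  have hedges := p.edges_eq_of_cycleGraph_of_length_le rfl (by omega)
    (hlen ▸ cycleGraph_dist_add_natCast_le _ _)
  refine ⟨a, Eq.trans ?_ ha⟩
  rw [hedges]
  simp [List.range'_eq_map_range, Function.comp_def]

theorem IsStrongCFCColoring.cycleGraph_half_lt_two_pow {K : ℕ}
    (hc : IsStrongCFCColoring (cycleGraph (n + 2)) c)
    (hK : ∀ e ∈ (cycleGraph (n + 2)).edgeSet, c e < K) :
    (n + 1) / 2 < 2 ^ K := by
  set w := (List.range ((n + 1) / 2)).map fun t : ℕ => c s((t : Fin (n + 2)), t + 1)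
  have hcolors : w.toFinset ⊆ Finset.range K := by
    intro a ha
    obtain ⟨t, -, rfl⟩ := List.mem_map.mp (List.mem_toFinset.mp ha)
    exact Finset.mem_range.mpr (hK _ (cycleGraph_adj_iff_eq_add_one.mpr (Or.inl rfl)))
  calc (n + 1) / 2 = w.length := by simp [w]
    _ < 2 ^ w.toFinset.card :=
      w.length_lt_two_pow_card_toFinset_of_forall_infix
        (hc.exists_count_eq_one_of_infix_cycleGraph (by omega))
    _ ≤ 2 ^ K := Nat.pow_le_pow_right two_pos (by simpa using Finset.card_le_card hcolors)

end Cycle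

theorem scfc_cycleGraph_ge (n : ℕ) (hn : 3 ≤ n) :
    Nat.clog 2 n - 1 ≤ scfc (SimpleGraph.cycleGraph n) := by
  obtain ⟨n, rfl⟩ : ∃ m, n = m + 2 := ⟨n - 2, by omega⟩
  obtain ⟨c, hK, hc⟩ :=
    exists_isStrongCFCColoring_lt_scfc (G := cycleGraph (n + 2)) cycleGraph_connected
  have hhalf := hc.cycleGraph_half_lt_two_pow hK
  have hle : n + 2 ≤ 2 ^ (scfc (cycleGraph (n + 2)) + 1) := by rw [pow_succ]; omega
  have hclog := (Nat.clog_le_iff_le_pow one_lt_two).mpr hle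
  omega
end

section
/- Let G be a connected graph with m edges containing a cycle C of length ℓ. Then scfc(G) ≤ m − ℓ + ⌈log₂ ℓ⌉. -/
open SimpleGraph

/-!
Let `L = ⌈log₂ ℓ⌉`. The edges off `C` get pairwise distinct colours `L, L + 1, …`, so a shortest
path through one of them is conflict-free. The edges of `C`, numbered `0, …, ℓ - 1`, fall into
the halves `[0, h)` and `[h, ℓ)` with `h = ⌈ℓ/2⌉`; the first edge of each half gets colour `L - 1`
and the edge at offset `j > 0` in its half gets `ν₂(j) < L - 1`. A shortest path inside `C` runs
along at most `⌊ℓ/2⌋` consecutive edges of `C`. If it contains the first edge of a half, it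
contains only one, and its colour `L - 1` is unique; otherwise its offsets are consecutive positive
integers, and among those the largest `2`-adic valuation is attained only once.
-/

open Finset

lemma padicValNat_lt_of_lt_pow {p n t : ℕ} (hn : n ≠ 0) (h : n < p ^ t) : padicValNat p n < t :=
  (padicValNat_le_nat_log n).trans_lt (Nat.log_lt_of_lt_pow hn h)

/-- Two numbers `2 ^ M * a < 2 ^ M * b` with `a, b` odd enclose `2 ^ M * (a + 1)`. -/
lemma exists_padicValNat_two_lt_between {i j : ℕ} (hi : i ≠ 0) (hij : i < j)
    (h : padicValNat 2 i = padicValNat 2 j) :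
    ∃ m, i < m ∧ m < j ∧ padicValNat 2 i < padicValNat 2 m := by
  set M := padicValNat 2 i
  have hj : j ≠ 0 := by omega
  obtain ⟨a, ha⟩ : 2 ^ M ∣ i := pow_padicValNat_dvd
  obtain ⟨b, hb⟩ : 2 ^ M ∣ j := h ▸ pow_padicValNat_dvd
  have ha_odd : ¬ 2 ∣ a := fun ⟨a', ha'⟩ =>
    pow_succ_padicValNat_not_dvd hi
      (show 2 ^ (M + 1) ∣ i from ⟨a', by rw [ha, ha', pow_succ]; ring⟩)
  have hb_odd : ¬ 2 ∣ b := fun ⟨b', hb'⟩ =>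
    pow_succ_padicValNat_not_dvd hj
      (show 2 ^ (padicValNat 2 j + 1) ∣ j from ⟨b', by rw [← h, hb, hb', pow_succ]; ring⟩)
  have hpos : 0 < 2 ^ M := by positivity
  have hab : a + 1 < b := by
    have : a < b := by rw [ha, hb] at hij; exact Nat.lt_of_mul_lt_mul_left hij
    omega
  refine ⟨2 ^ M * (a + 1), by rw [ha]; nlinarith, by rw [hb]; nlinarith, ?_⟩
  have hdvd : 2 ^ (M + 1) ∣ 2 ^ M * (a + 1) :=
    ⟨(a + 1) / 2, by rw [pow_succ, mul_assoc]; congr 1; omega⟩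
  have := (padicValNat_dvd_iff_le (p := 2) (by positivity)).mp hdvd
  omega

lemma exists_forall_ne_padicValNat_two_add_lt (a d : ℕ) (ha : a ≠ 0) (hd : d ≠ 0) :
    ∃ k₀ < d, ∀ k < d, k ≠ k₀ → padicValNat 2 (a + k) < padicValNat 2 (a + k₀) := by
  obtain ⟨k₀, hk₀, hmax⟩ := Finset.exists_max_image (Finset.range d)
    (fun k => padicValNat 2 (a + k)) ⟨0, Finset.mem_range.mpr (Nat.pos_of_ne_zero hd)⟩
  rw [Finset.mem_range] at hk₀
  refine ⟨k₀, hk₀, fun k hk hne => (hmax k (Finset.mem_range.mpr hk)).lt_of_ne fun heq => ?_⟩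
  have no_second_max : ∀ x y, x < y → y < d → padicValNat 2 (a + x) = padicValNat 2 (a + k₀) →
      padicValNat 2 (a + y) = padicValNat 2 (a + k₀) → False := by
    intro x y hxy hy hx_max hy_max
    obtain ⟨m, hxm, hmy, hlt⟩ := exists_padicValNat_two_lt_between (by omega)
      (by omega : a + x < a + y) (hx_max.trans hy_max.symm)
    have := hmax (m - a) (Finset.mem_range.mpr (by omega))
    rw [Nat.add_sub_cancel' (by omega)] at this
    omega
  rcases Nat.lt_or_gt_of_ne hne with h | h
  · exact no_second_max k k₀ h hk₀ heq rfl
  · exact no_second_max k₀ k h hk rfl heq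

lemma Nat.add_mod_eq_add_of_forall_ne_zero {n s k : ℕ} (h : ∀ j ≤ k, (s + j) % n ≠ 0) :
    (s + k) % n = s % n + k := by
  rcases Nat.eq_zero_or_pos n with rfl | hn
  · simp
  have hlt : s % n + k < n := by
    by_contra! hge
    apply h (n - s % n) (by omega)
    rw [← Nat.mod_add_mod, Nat.add_sub_cancel' (Nat.mod_lt s hn).le, Nat.mod_self]
  rw [← Nat.mod_add_mod, Nat.mod_eq_of_lt hlt]

/-- Position `i` of a cycle of length `ℓ`, measured from the start of its half: the halves are
`[0, ⌈ℓ/2⌉)` and `[⌈ℓ/2⌉, ℓ)`. -/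
def cycleOffset (ℓ i : ℕ) : ℕ := i % ℓ % ((ℓ + 1) / 2)

def cycleColoring (ℓ i : ℕ) : ℕ :=
  if cycleOffset ℓ i = 0 then Nat.clog 2 ℓ - 1 else padicValNat 2 (cycleOffset ℓ i)

lemma cycleColoring_mod (ℓ i : ℕ) : cycleColoring ℓ (i % ℓ) = cycleColoring ℓ i := by
  rw [cycleColoring, cycleColoring, cycleOffset, Nat.mod_mod, ← cycleOffset]

lemma cycleOffset_lt {ℓ : ℕ} (hℓ : ℓ ≠ 0) (i : ℕ) : cycleOffset ℓ i < (ℓ + 1) / 2 :=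
  Nat.mod_lt _ (by omega)

lemma padicValNat_two_lt_clog_sub_one {ℓ q : ℕ} (hq : q ≠ 0) (hqℓ : q < (ℓ + 1) / 2) :
    padicValNat 2 q < Nat.clog 2 ℓ - 1 := by
  refine padicValNat_lt_of_lt_pow hq ?_
  have hpow : ℓ ≤ 2 ^ Nat.clog 2 ℓ := Nat.le_pow_clog (by norm_num) ℓ
  obtain ⟨L, hL⟩ : ∃ L, Nat.clog 2 ℓ = L + 1 := Nat.exists_eq_add_one.mpr (by
    by_contra! h0
    rw [Nat.le_zero.mp h0] at hpow
    omega)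
  rw [hL, pow_succ] at hpow
  rw [hL, Nat.add_sub_cancel]
  omega

lemma cycleColoring_lt {ℓ : ℕ} (hℓ : 2 ≤ ℓ) (i : ℕ) : cycleColoring ℓ i < Nat.clog 2 ℓ := by
  have hL : 0 < Nat.clog 2 ℓ := Nat.clog_pos (by norm_num) hℓ
  unfold cycleColoring
  split_ifs with h0
  · omega
  · have := padicValNat_two_lt_clog_sub_one h0 (cycleOffset_lt (by omega) i)
    omega

lemma cycleOffset_add_of_eq_zero {ℓ s j : ℕ} (hj : 2 * (j + 1) ≤ ℓ) (hs : cycleOffset ℓ s = 0) :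
    cycleOffset ℓ (s + j) = j := by
  unfold cycleOffset at *
  set h := (ℓ + 1) / 2
  obtain ⟨c, hc⟩ := Nat.dvd_of_mod_eq_zero hs
  have hc2 : c < 2 := by
    by_contra!
    have : ℓ ≤ h * 2 := by omega
    have := Nat.mod_lt s (show 0 < ℓ by omega)
    nlinarith
  have hlt : s % ℓ + j < ℓ := by interval_cases c <;> omega
  rw [← Nat.mod_add_mod, Nat.mod_eq_of_lt hlt, hc]
  interval_cases c
  · simpa using Nat.mod_eq_of_lt (by omega)
  · simpa using Nat.mod_eq_of_lt (by omega)

lemma cycleOffset_add_of_forall_ne_zero {ℓ s k : ℕ} (h : ∀ j ≤ k, cycleOffset ℓ (s + j) ≠ 0) :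
    cycleOffset ℓ (s + k) = cycleOffset ℓ s + k := by
  have hℓ : ∀ j ≤ k, (s + j) % ℓ = s % ℓ + j := fun j hj =>
    Nat.add_mod_eq_add_of_forall_ne_zero fun i hi h0 => h i (by omega) (by simp [cycleOffset, h0])
  unfold cycleOffset at *
  rw [hℓ k le_rfl]
  exact Nat.add_mod_eq_add_of_forall_ne_zero fun j hj => hℓ j hj ▸ h j hj

lemma exists_forall_ne_cycleColoring_add_ne {ℓ d : ℕ} (s : ℕ) (hd : d ≠ 0) (h2d : 2 * d ≤ ℓ) :
    ∃ k₀ < d, ∀ k < d, k ≠ k₀ → cycleColoring ℓ (s + k) ≠ cycleColoring ℓ (s + k₀) := by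
  by_cases hzero : ∃ k₀ < d, cycleOffset ℓ (s + k₀) = 0
  · obtain ⟨k₀, hk₀, h0⟩ := hzero
    refine ⟨k₀, hk₀, fun k hk hne => ?_⟩
    have hk0 : cycleOffset ℓ (s + k) ≠ 0 := by
      intro hk0
      rcases Nat.lt_or_gt_of_ne hne with hlt | hgt
      · have := cycleOffset_add_of_eq_zero (j := k₀ - k) (by omega) hk0
        rw [add_assoc, Nat.add_sub_cancel' hlt.le] at this
        omega
      · have := cycleOffset_add_of_eq_zero (j := k - k₀) (by omega) h0
        rw [add_assoc, Nat.add_sub_cancel' hgt.le] at this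
        omega
    rw [cycleColoring, if_neg hk0, cycleColoring, if_pos h0]
    exact (padicValNat_two_lt_clog_sub_one hk0 (cycleOffset_lt (by omega) _)).ne
  · push Not at hzero
    have hlin : ∀ k < d, cycleOffset ℓ (s + k) = cycleOffset ℓ s + k := fun k hk =>
      cycleOffset_add_of_forall_ne_zero fun j hj => hzero j (by omega)
    obtain ⟨k₀, hk₀, hmax⟩ :=
      exists_forall_ne_padicValNat_two_add_lt _ d (by simpa using hzero 0 (by omega)) hd
    refine ⟨k₀, hk₀, fun k hk hne => ?_⟩
    rw [cycleColoring, cycleColoring, if_neg (hzero k hk), if_neg (hzero k₀ hk₀), hlin k hk,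
      hlin k₀ hk₀]
    exact (hmax k hk hne).ne

lemma List.count_map_eq_one {α β : Type*} [BEq α] [LawfulBEq α] [BEq β] [LawfulBEq β]
    {l : List α} (hl : l.Nodup) {a : α} (ha : a ∈ l) (f : α → β)
    (hf : ∀ b ∈ l, b ≠ a → f b ≠ f a) : (l.map f).count (f a) = 1 := by
  rw [List.count_eq_countP, List.countP_map, ← List.count_eq_one_of_mem hl ha,
    List.count_eq_countP]
  refine List.countP_congr fun b hb => ?_
  simp only [Function.comp_apply, beq_iff_eq]
  exact ⟨fun h => by_contra fun hne => hf b hb hne h, congrArg f⟩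

lemma SimpleGraph.exists_coloring_extend_fresh {V : Type*} {G : SimpleGraph V} [Fintype G.edgeSet]
    {S : Finset (Sym2 V)} (hS : S ⊆ G.edgeFinset) (c₀ : Sym2 V → ℕ) (L : ℕ)
    (hc₀ : ∀ e ∈ S, c₀ e < L) :
    ∃ c : Sym2 V → ℕ, (∀ e ∈ S, c e = c₀ e) ∧
      (∀ e ∈ G.edgeSet, c e < L + (#G.edgeFinset - #S)) ∧
      ∀ e ∈ G.edgeSet, e ∉ S → ∀ e' ∈ G.edgeSet, e' ≠ e → c e' ≠ c e := by
  classical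
  set F := G.edgeFinset \ S
  have hF : ∀ e ∈ G.edgeSet, e ∈ F ∨ e ∈ S := fun e he => by by_cases e ∈ S <;> simp_all [F]
  have hFcard : #F = #G.edgeFinset - #S := card_sdiff_of_subset hS
  set c : Sym2 V → ℕ := fun e => if he : e ∈ F then L + F.equivFin ⟨e, he⟩ else c₀ e
  have hcS : ∀ e ∈ S, c e = c₀ e := fun e he => by simp [c, F, he]
  have hcF : ∀ e (he : e ∈ F), c e = L + F.equivFin ⟨e, he⟩ := fun e he => by simp [c, he]
  refine ⟨c, hcS, fun e he => ?_, fun e he heS e' he' hne => ?_⟩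
  · rcases hF e he with heF | heS
    · have := (F.equivFin ⟨e, heF⟩).isLt
      rw [hcF e heF]
      omega
    · have := hc₀ e heS
      rw [hcS e heS]
      omega
  · have heF : e ∈ F := (hF e he).resolve_right heS
    rw [hcF e heF]
    rcases hF e' he' with he'F | he'S
    · rw [hcF e' he'F]
      intro h
      have := F.equivFin.injective
        (Fin.ext (show (F.equivFin ⟨e', he'F⟩ : ℕ) = F.equivFin ⟨e, heF⟩ by omega))
      exact hne (congrArg Subtype.val this)
    · have := hc₀ e' he'S
      rw [hcS e' he'S]
      omega

namespace SimpleGraph.Walk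

variable {V : Type*} {G : SimpleGraph V} {v : V} (p : G.Walk v v)

def cycleVert (i : ZMod p.length) : V := p.getVert i.val

lemma cycleVert_natCast {j : ℕ} (hj : j ≤ p.length) : p.cycleVert j = p.getVert j := by
  rcases hj.lt_or_eq with hj | rfl
  · rw [cycleVert, ZMod.val_natCast, Nat.mod_eq_of_lt hj]
  · rw [cycleVert, ZMod.natCast_self, ZMod.val_zero, getVert_zero, getVert_length]

lemma getElem_edges_eq_cycleVert {j : ℕ} (hj : j < p.edges.length) :
    p.edges[j] = s(p.cycleVert j, p.cycleVert (j + 1)) := by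
  rw [length_edges] at hj
  rw [getElem_edges, ← p.cycleVert_natCast hj.le, ← p.cycleVert_natCast hj, Nat.cast_succ]

lemma exists_eq_mk_cycleVert_of_mem_edges {e : Sym2 V} (he : e ∈ p.edges) :
    ∃ i, e = s(p.cycleVert i, p.cycleVert (i + 1)) := by
  obtain ⟨j, hj, rfl⟩ := List.mem_iff_getElem.mp he
  exact ⟨j, p.getElem_edges_eq_cycleVert hj⟩

variable [NeZero p.length]

lemma mk_cycleVert_mem_edges (i : ZMod p.length) :
    s(p.cycleVert i, p.cycleVert (i + 1)) ∈ p.edges := by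
  have := p.getElem_edges_eq_cycleVert (j := i.val) (by simpa using ZMod.val_lt i)
  rw [ZMod.natCast_zmod_val] at this
  exact this ▸ List.getElem_mem _

lemma adj_cycleVert_add_one (i : ZMod p.length) : G.Adj (p.cycleVert i) (p.cycleVert (i + 1)) :=
  p.adj_of_mem_edges (p.mk_cycleVert_mem_edges i)

lemma dist_cycleVert_add_le (i : ZMod p.length) (n : ℕ) :
    G.dist (p.cycleVert i) (p.cycleVert (i + n)) ≤ n := by
  induction n with
  | zero => simp
  | succ n ih =>
    have hadj := p.adj_cycleVert_add_one (i + n)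
    rw [Nat.cast_succ, ← add_assoc]
    have := hadj.reachable.dist_triangle_right (p.cycleVert i)
    rw [dist_eq_one_iff_adj.mpr hadj] at this
    omega

variable {p}

lemma IsCycle.cycleVert_injective (hp : p.IsCycle) : Function.Injective p.cycleVert := by
  intro i j h
  have hℓ := NeZero.pos p.length
  exact ZMod.val_injective _ (hp.getVert_injOn' (by simp; have := ZMod.val_lt i; omega)
    (by simp; have := ZMod.val_lt j; omega) h)

lemma IsCycle.idxOf_mk_cycleVert [DecidableEq V] (hp : p.IsCycle) (i : ZMod p.length) :
    p.edges.idxOf s(p.cycleVert i, p.cycleVert (i + 1)) = i.val := by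
  have hi : i.val < p.edges.length := by simpa using ZMod.val_lt i
  have := p.getElem_edges_eq_cycleVert hi
  rw [ZMod.natCast_zmod_val] at this
  rw [← this, hp.edges_nodup.idxOf_getElem]

lemma IsCycle.eq_cycleVert_add_one_or_sub_one (hp : p.IsCycle) {x y : V} (he : s(x, y) ∈ p.edges)
    {a : ZMod p.length} (hx : x = p.cycleVert a) :
    y = p.cycleVert (a + 1) ∨ y = p.cycleVert (a - 1) := by
  obtain ⟨i, hi⟩ := p.exists_eq_mk_cycleVert_of_mem_edges he
  rcases Sym2.eq_iff.mp hi with ⟨hxi, hyi⟩ | ⟨hxi, hyi⟩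
  · obtain rfl := hp.cycleVert_injective (hx.symm.trans hxi)
    exact .inl hyi
  · obtain rfl := hp.cycleVert_injective (hx.symm.trans hxi)
    exact .inr (by rwa [add_sub_cancel_right])

lemma IsCycle.exists_getVert_eq_cycleVert (hp : p.IsCycle) {u w : V} {q : G.Walk u w}
    (hq : q.IsPath) (hsub : ∀ e ∈ q.edges, e ∈ p.edges) (hlen : q.length ≠ 0) :
    ∃ t ε, (ε = 1 ∨ ε = -1) ∧ ∀ k ≤ q.length, q.getVert k = p.cycleVert (t + k * ε) := by
  have hedge : ∀ k < q.length, s(q.getVert k, q.getVert (k + 1)) ∈ p.edges := fun k hk =>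
    hsub _ (getElem_edges (p := q) (by simpa using hk) ▸ List.getElem_mem _)
  obtain ⟨t, ht⟩ : ∃ t, q.getVert 0 = p.cycleVert t := by
    obtain ⟨i, hi⟩ := p.exists_eq_mk_cycleVert_of_mem_edges (hedge 0 (by omega))
    rcases Sym2.eq_iff.mp hi with ⟨h, -⟩ | ⟨h, -⟩ <;> exact ⟨_, h⟩
  obtain ⟨ε, hε, h1⟩ :
      ∃ ε : ZMod p.length, (ε = 1 ∨ ε = -1) ∧ q.getVert 1 = p.cycleVert (t + ε) := by
    rcases hp.eq_cycleVert_add_one_or_sub_one (hedge 0 (by omega)) ht with h | h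
    · exact ⟨1, .inl rfl, h⟩
    · exact ⟨-1, .inr rfl, by rwa [← sub_eq_add_neg]⟩
  have step : ∀ k, k + 1 ≤ q.length → q.getVert k = p.cycleVert (t + k * ε) ∧
      q.getVert (k + 1) = p.cycleVert (t + (k + 1 : ℕ) * ε) := by
    intro k hk
    induction k with
    | zero => simpa [ht] using h1
    | succ k ih =>
      obtain ⟨hk_prev, hk_cur⟩ := ih (by omega)
      refine ⟨hk_cur, ?_⟩
      have hnext := hp.eq_cycleVert_add_one_or_sub_one (hedge (k + 1) hk) hk_cur
      have : q.getVert (k + 2) = p.cycleVert (t + (k + 1 : ℕ) * ε + ε) ∨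
          q.getVert (k + 2) = p.cycleVert (t + (k + 1 : ℕ) * ε - ε) := by
        rcases hε with rfl | rfl
        · exact hnext
        · simpa [← sub_eq_add_neg, or_comm] using hnext
      rcases this with h | h
      · rw [h]; congr 1; push_cast; ring
      · have hback : q.getVert (k + 2) = q.getVert k := by
          rw [h, hk_prev]; congr 1; push_cast; ring
        have := hq.getVert_injOn (by simp; omega) (by simp; omega) hback
        omega
  refine ⟨t, ε, hε, fun k hk => ?_⟩
  rcases k with _ | k
  · exact (step 0 (by omega)).1
  · exact (step k hk).2

variable {c : Sym2 V → ℕ}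

lemma exists_count_map_eq_one_of_getVert_eq_cycleVert_add
    (hc : ∀ i, c s(p.cycleVert i, p.cycleVert (i + 1)) = cycleColoring p.length i.val)
    {u w : V} {q : G.Walk u w} (hd : q.length = G.dist u w) (hlen : q.length ≠ 0)
    (t : ZMod p.length) (hq : ∀ k ≤ q.length, q.getVert k = p.cycleVert (t + k)) :
    ∃ a, (q.edges.map c).count a = 1 := by
  set d := q.length
  have hu : u = p.cycleVert t := by simpa using hq 0 (by omega)
  have hw : w = p.cycleVert (t + d) := hq d le_rfl ▸ (getVert_length q).symm
  have hdℓ : d < p.length := by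
    have := p.dist_cycleVert_add_le t (d : ZMod p.length).val
    rw [ZMod.natCast_zmod_val, ← hu, ← hw, ← hd] at this
    exact this.trans_lt (ZMod.val_lt _)
  -- the rest of the cycle leads from `w` back to `u` in `ℓ - d` steps
  have h2d : 2 * d ≤ p.length := by
    have := p.dist_cycleVert_add_le (t + d) (p.length - d)
    rw [Nat.cast_sub hdℓ.le, ZMod.natCast_self, ← hw, show t + d + (0 - d) = t by ring, ← hu,
      dist_comm, ← hd] at this
    omega
  have hcolors :
      q.edges.map c = (List.range d).map fun k => cycleColoring p.length (t.val + k) := by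
    refine List.ext_getElem (by simp [d]) fun k hk _ => ?_
    have hk' : k < d := by simpa using hk
    rw [List.getElem_map, List.getElem_map, List.getElem_range, getElem_edges, hq k hk'.le,
      hq (k + 1) hk', Nat.cast_succ, ← add_assoc, hc, ZMod.val_add, ZMod.val_natCast,
      Nat.add_mod_mod, cycleColoring_mod]
  obtain ⟨k₀, hk₀, huniq⟩ := exists_forall_ne_cycleColoring_add_ne t.val hlen h2d
  exact ⟨_, hcolors ▸ List.count_map_eq_one List.nodup_range (List.mem_range.mpr hk₀) _
    fun k hk hne => huniq k (List.mem_range.mp hk) hne⟩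

lemma IsCycle.exists_count_map_eq_one (hp : p.IsCycle)
    (hc : ∀ i, c s(p.cycleVert i, p.cycleVert (i + 1)) = cycleColoring p.length i.val)
    {u w : V} {q : G.Walk u w} (hq : q.IsPath) (hd : q.length = G.dist u w) (hne : u ≠ w)
    (hsub : ∀ e ∈ q.edges, e ∈ p.edges) : ∃ a, (q.edges.map c).count a = 1 := by
  have hlen : q.length ≠ 0 := fun h => hne (q.eq_of_length_eq_zero h)
  obtain ⟨t, ε, rfl | rfl, hq'⟩ := hp.exists_getVert_eq_cycleVert hq hsub hlen
  · exact exists_count_map_eq_one_of_getVert_eq_cycleVert_add hc hd hlen t (by simpa using hq')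
  · obtain ⟨a, ha⟩ := exists_count_map_eq_one_of_getVert_eq_cycleVert_add hc (q := q.reverse)
      (by rw [length_reverse, hd, dist_comm]) (by simpa using hlen) (t - q.length) fun k hk => by
        rw [length_reverse] at hk
        rw [getVert_reverse, hq' _ (Nat.sub_le _ _), Nat.cast_sub hk]
        congr 1
        ring
    exact ⟨a, by rwa [edges_reverse, List.map_reverse, List.count_reverse] at ha⟩

end SimpleGraph.Walk

theorem scfc_le_of_cycle {V : Type*} [Fintype V] [DecidableEq V]
    (G : SimpleGraph V) [DecidableRel G.Adj] (hc : G.Connected)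
    (v : V) (p : G.Walk v v) (hp : p.IsCycle) :
    scfc G ≤ G.edgeFinset.card - p.length + Nat.clog 2 p.length := by
  have hℓ := hp.three_le_length
  have : NeZero p.length := ⟨by omega⟩
  have hS : p.edges.toFinset ⊆ G.edgeFinset := fun e he => by
    simpa using p.edges_subset_edgeSet (List.mem_toFinset.mp he)
  have hScard : #p.edges.toFinset = p.length := by
    rw [List.toFinset_card_of_nodup hp.edges_nodup, Walk.length_edges]
  obtain ⟨c, hc_cycle, hc_lt, hc_fresh⟩ := exists_coloring_extend_fresh hS
    (fun e => cycleColoring p.length (p.edges.idxOf e)) (Nat.clog 2 p.length)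
    fun e _ => cycleColoring_lt (by omega) _
  have hc_cycleVert : ∀ i, c s(p.cycleVert i, p.cycleVert (i + 1)) =
      cycleColoring p.length i.val := fun i => by
    rw [hc_cycle _ (List.mem_toFinset.mpr (p.mk_cycleVert_mem_edges i)), hp.idxOf_mk_cycleVert]
  refine Nat.sInf_le ⟨c, fun e he => ?_, fun u w huw => ?_⟩
  · have := hc_lt e he
    omega
  obtain ⟨q, hq, hqd⟩ := hc.exists_path_of_dist u w
  refine ⟨q, hq, hqd, ?_⟩
  by_cases hsub : ∀ e ∈ q.edges, e ∈ p.edges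
  · exact hp.exists_count_map_eq_one hc_cycleVert hq hqd huw hsub
  · push Not at hsub
    obtain ⟨e, heq, hep⟩ := hsub
    exact ⟨c e, List.count_map_eq_one hq.edges_nodup heq c fun e' he' hne => hc_fresh e
      (q.edges_subset_edgeSet heq) (by simpa using hep) e' (q.edges_subset_edgeSet he') hne⟩
end

section
/- Let G be a connected graph with m ≥ 2 edges containing t pairwise edge-disjoint triangles. Then scfc(G) ≤ m − 2t. -/
open SimpleGraph

/-- The three edges of a triangle `(a, b, c)`. -/
def triangleEdges {V : Type*} [DecidableEq V] (T : V × V × V) : Finset (Sym2 V) :=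
  {s(T.1, T.2.1), s(T.2.1, T.2.2), s(T.1, T.2.2)}

/-! Give the three edges of each triangle one common colour and every other edge a colour of
its own: that is `t + (m - 3t) = m - 2t` colours. The vertices of a shortest `u`–`v` path have
pairwise distinct distances from `u`, whereas the distances from `u` of the vertices of a
triangle differ by at most one; so a shortest path never uses two edges of one triangle. Hence
the edges of a shortest path carry pairwise distinct colours, so each colour on it appears
exactly once. -/

open Finset

section blockIndex

variable {α ι : Type*} {T : ι → Finset α} {e : α}

open Classical in
noncomputable def blockIndex (T : ι → Finset α) (e : α) : ι ⊕ α :=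
  if h : ∃ i, e ∈ T i then .inl h.choose else .inr e

lemma mem_of_blockIndex_eq_inl {i : ι} (h : blockIndex T e = .inl i) : e ∈ T i := by
  unfold blockIndex at h
  split_ifs at h with he
  exact Sum.inl_injective h ▸ he.choose_spec

lemma blockIndex_eq_inr {a : α} (h : blockIndex T e = .inr a) : a = e ∧ ∀ i, e ∉ T i := by
  unfold blockIndex at h
  split_ifs at h with he
  exact ⟨(Sum.inr_injective h).symm, not_exists.mp he⟩

lemma eq_or_exists_mem_of_blockIndex_eq {e₁ e₂ : α}
    (h : blockIndex T e₁ = blockIndex T e₂) : e₁ = e₂ ∨ ∃ i, e₁ ∈ T i ∧ e₂ ∈ T i := by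
  cases h₁ : blockIndex T e₁ with
  | inl i => exact .inr ⟨i, mem_of_blockIndex_eq_inl h₁, mem_of_blockIndex_eq_inl (h ▸ h₁)⟩
  | inr a =>
    exact .inl ((blockIndex_eq_inr h₁).1.symm.trans (blockIndex_eq_inr (h ▸ h₁)).1)

lemma card_image_blockIndex_le [Fintype ι] [DecidableEq ι] [DecidableEq α] (T : ι → Finset α)
    (E : Finset α) :
    #(E.image (blockIndex T)) ≤ Fintype.card ι + #(E \ univ.biUnion T) := by
  rw [← card_univ, ← card_disjSum]
  refine card_le_card fun x hx ↦ ?_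
  obtain ⟨e, he, rfl⟩ := mem_image.mp hx
  cases h : blockIndex T e with
  | inl i => simp
  | inr a =>
    obtain ⟨rfl, hnot⟩ := blockIndex_eq_inr h
    simpa [mem_disjSum] using ⟨he, hnot⟩

end blockIndex

lemma Finset.exists_recoloring_lt_card_image {α β : Type*} [DecidableEq β] (E : Finset α)
    (f : α → β) :
    ∃ c : α → ℕ, (∀ e ∈ E, c e < #(E.image f)) ∧
      ∀ e₁ ∈ E, ∀ e₂ ∈ E, c e₁ = c e₂ → f e₁ = f e₂ := by
  set s := E.image f
  refine ⟨fun e ↦ if h : f e ∈ s then s.equivFin ⟨f e, h⟩ else 0, fun e he ↦ ?_,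
    fun e₁ he₁ e₂ he₂ h ↦ ?_⟩
  · simp [s, mem_image_of_mem f he]
  · have h₁ : f e₁ ∈ s := mem_image_of_mem f he₁
    have h₂ : f e₂ ∈ s := mem_image_of_mem f he₂
    simp only [h₁, h₂, dite_true] at h
    exact congrArg Subtype.val (s.equivFin.injective (Fin.ext h))

lemma card_triangleEdges {V : Type*} [DecidableEq V] {T : V × V × V} (h₁ : T.1 ≠ T.2.1)
    (h₂ : T.2.1 ≠ T.2.2) (h₃ : T.1 ≠ T.2.2) : #(triangleEdges T) = 3 := by
  obtain ⟨a, b, c⟩ := T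
  refine card_eq_three.mpr ⟨_, _, _, ?_, ?_, ?_, rfl⟩ <;> simp <;> tauto

namespace SimpleGraph

variable {V : Type*} {G : SimpleGraph V}

namespace Walk

variable {u v : V} {p : G.Walk u v}

lemma dist_eq_length_takeUntil [DecidableEq V] (hp : p.length = G.dist u v) {w : V}
    (hw : w ∈ p.support) :
    G.dist u w = (p.takeUntil w hw).length :=
  (length_eq_dist_of_subwalk hp (isSubwalk_of_append_left (p.take_spec hw).symm)).symm

lemma injOn_dist_support (hp : p.length = G.dist u v) :
    Set.InjOn (G.dist u) {w | w ∈ p.support} := by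
  classical
  intro x hx y hy hxy
  rw [← getVert_length_takeUntil hx, ← getVert_length_takeUntil hy,
    ← dist_eq_length_takeUntil hp, ← dist_eq_length_takeUntil hp, hxy]

lemma not_adj_of_mem_support (hp : p.length = G.dist u v) {x y z : V} (hx : x ∈ p.support)
    (hy : y ∈ p.support) (hz : z ∈ p.support) (hxy : G.Adj x y) (hyz : G.Adj y z) :
    ¬G.Adj x z := by
  intro hxz
  have hne {a b : V} (ha : a ∈ p.support) (hb : b ∈ p.support) (hab : G.Adj a b) :
      G.dist u a ≠ G.dist u b :=
    fun h ↦ hab.ne (injOn_dist_support hp ha hb h)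
  have := hne hx hy hxy
  have := hne hy hz hyz
  have := hne hx hz hxz
  have := hxy.diff_dist_adj (u := u)
  have := hyz.diff_dist_adj (u := u)
  have := hxz.diff_dist_adj (u := u)
  omega

lemma eq_of_mem_edges_of_mem_triangleEdges [DecidableEq V] (hp : p.length = G.dist u v)
    {T : V × V × V} (hT : G.Adj T.1 T.2.1 ∧ G.Adj T.2.1 T.2.2 ∧ G.Adj T.1 T.2.2)
    {e₁ e₂ : Sym2 V} (he₁ : e₁ ∈ p.edges) (he₂ : e₂ ∈ p.edges)
    (hT₁ : e₁ ∈ triangleEdges T) (hT₂ : e₂ ∈ triangleEdges T) : e₁ = e₂ := by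
  by_contra hne
  obtain ⟨a, b, c⟩ := T
  obtain ⟨hab, hbc, hac⟩ := hT
  have hcover : ∀ w ∈ [a, b, c], w ∈ e₁ ∨ w ∈ e₂ := by
    simp only [triangleEdges, Finset.mem_insert, Finset.mem_singleton] at hT₁ hT₂
    rcases hT₁ with rfl | rfl | rfl <;> rcases hT₂ with rfl | rfl | rfl <;> simp_all
  have hsupp : ∀ w ∈ [a, b, c], w ∈ p.support := fun w hw ↦
    (hcover w hw).elim (mem_support_of_mem_edges he₁) (mem_support_of_mem_edges he₂)
  exact not_adj_of_mem_support hp (hsupp a (by simp)) (hsupp b (by simp)) (hsupp c (by simp))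
    hab hbc hac

lemma injOn_blockIndex_triangleEdges [DecidableEq V] {ι : Type*} {tri : ι → V × V × V}
    (htri : ∀ i, G.Adj (tri i).1 (tri i).2.1 ∧ G.Adj (tri i).2.1 (tri i).2.2 ∧
      G.Adj (tri i).1 (tri i).2.2)
    (hp : p.length = G.dist u v) :
    Set.InjOn (blockIndex fun i ↦ triangleEdges (tri i)) {e | e ∈ p.edges} := by
  intro e₁ he₁ e₂ he₂ h
  obtain rfl | ⟨i, hi₁, hi₂⟩ := eq_or_exists_mem_of_blockIndex_eq h
  · rfl
  · exact eq_of_mem_edges_of_mem_triangleEdges hp (htri i) he₁ he₂ hi₁ hi₂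

end Walk

lemma isStrongCFCColoring_of_injOn (hconn : G.Connected) {c : Sym2 V → ℕ}
    (hc : ∀ u v (p : G.Walk u v), p.length = G.dist u v → Set.InjOn c {e | e ∈ p.edges}) :
    IsStrongCFCColoring G c := by
  intro u v huv
  obtain ⟨p, hpath, hp⟩ := hconn.exists_path_of_dist u v
  refine ⟨p, hpath, hp, ?_⟩
  obtain ⟨e, he⟩ := List.exists_mem_of_length_pos
    (p.length_edges ▸ hp ▸ hconn.pos_dist_of_ne huv)
  exact ⟨c e, List.count_eq_one_of_mem (hpath.edges_nodup.map_on fun e₁ he₁ e₂ he₂ ↦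
    hc u v p hp he₁ he₂) (List.mem_map_of_mem he)⟩

lemma scfc_le_card_image [Fintype G.edgeSet] {β : Type*} [DecidableEq β] (hconn : G.Connected)
    (f : Sym2 V → β)
    (hf : ∀ u v (p : G.Walk u v), p.length = G.dist u v → Set.InjOn f {e | e ∈ p.edges}) :
    scfc G ≤ #(G.edgeFinset.image f) := by
  obtain ⟨c, hlt, hcf⟩ := G.edgeFinset.exists_recoloring_lt_card_image f
  have hmem {u v : V} {p : G.Walk u v} {e : Sym2 V} (he : e ∈ p.edges) : e ∈ G.edgeFinset :=
    mem_edgeFinset.mpr (p.edges_subset_edgeSet he)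
  refine Nat.sInf_le ⟨c, fun e he ↦ hlt e (mem_edgeFinset.mpr he), ?_⟩
  exact isStrongCFCColoring_of_injOn hconn fun u v p hp e₁ he₁ e₂ he₂ h ↦
    hf u v p hp he₁ he₂ (hcf e₁ (hmem he₁) e₂ (hmem he₂) h)

end SimpleGraph

theorem scfc_le_of_edge_disjoint_triangles_general {V : Type*} [Fintype V] [DecidableEq V]
    (G : SimpleGraph V) [DecidableRel G.Adj] (hc : G.Connected)
    (t : ℕ) (tri : Fin t → V × V × V)
    (htri : ∀ i, G.Adj (tri i).1 (tri i).2.1 ∧ G.Adj (tri i).2.1 (tri i).2.2 ∧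
      G.Adj (tri i).1 (tri i).2.2)
    (hdisj : ∀ i j, i ≠ j → Disjoint (triangleEdges (tri i)) (triangleEdges (tri j))) :
    scfc G ≤ G.edgeFinset.card - 2 * t := by
  set T := fun i ↦ triangleEdges (tri i)
  have hsub : univ.biUnion T ⊆ G.edgeFinset := by
    refine biUnion_subset.mpr fun i _ e he ↦ ?_
    obtain ⟨hab, hbc, hac⟩ := htri i
    simp only [T, triangleEdges, mem_insert, mem_singleton] at he
    rcases he with rfl | rfl | rfl <;> simpa
  have hcard : #(univ.biUnion T) = 3 * t := by
    have h3 (i : Fin t) : #(T i) = 3 :=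
      card_triangleEdges (htri i).1.ne (htri i).2.1.ne (htri i).2.2.ne
    rw [card_biUnion fun i _ j _ ↦ hdisj i j, sum_congr rfl fun i _ ↦ h3 i]
    simp [mul_comm]
  calc scfc G ≤ #(G.edgeFinset.image (blockIndex T)) :=
        scfc_le_card_image hc _ fun _ _ _ ↦ Walk.injOn_blockIndex_triangleEdges htri
    _ ≤ t + #(G.edgeFinset \ univ.biUnion T) := by
        simpa using card_image_blockIndex_le T G.edgeFinset
    _ = #G.edgeFinset - 2 * t := by
        rw [card_sdiff_of_subset hsub, hcard]
        have := card_le_card hsub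
        omega

theorem scfc_le_of_edge_disjoint_triangles {V : Type*} [Fintype V] [DecidableEq V]
    (G : SimpleGraph V) [DecidableRel G.Adj] (hc : G.Connected)
    (hm : 2 ≤ G.edgeFinset.card) (t : ℕ) (tri : Fin t → V × V × V)
    (htri : ∀ i, G.Adj (tri i).1 (tri i).2.1 ∧ G.Adj (tri i).2.1 (tri i).2.2 ∧
      G.Adj (tri i).1 (tri i).2.2)
    (hdisj : ∀ i j, i ≠ j → Disjoint (triangleEdges (tri i)) (triangleEdges (tri j))) :
    scfc G ≤ G.edgeFinset.card - 2 * t :=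
  scfc_le_of_edge_disjoint_triangles_general G hc t tri htri hdisj
end

section
/- Let G be a nontrivial connected graph of size m. Then scfc(G) = m if and only if G is the star S_m. -/
/-!
In a star with centre `v`, two edges `va`, `vb` form the only geodesic from `a` to `b`, so a
strong conflict-free coloring has to give them different colors: it is injective on edges.
Conversely, if no vertex meets every edge, there are two edges that are either disjoint or two
sides of a triangle. Such edges never lie together on a geodesic, so they may share a color
while every other edge keeps its own, which saves one color.
-/

open SimpleGraph

open Finset

namespace List

variable {α β : Type*} [DecidableEq β] {l : List α} {c : α → β}

theorem count_map_eq_one_s17 {a : α} (hl : l.Nodup) (ha : a ∈ l)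
    (h : ∀ x ∈ l, c x = c a → x = a) : (l.map c).count (c a) = 1 := by
  classical
  rw [count, countP_map, ← count_eq_one_of_mem hl ha, count]
  exact countP_congr fun x hx => by simpa using ⟨h x hx, congrArg c⟩

theorem exists_count_map_eq_one_of_not_perm {e f : α} (hl : l.Nodup) (hne : l ≠ [])
    (hc : ∀ x ∈ l, ∀ y ∈ l, c x = c y → x = y ∨ s(x, y) = s(e, f)) (hperm : ¬ l.Perm [e, f]) :
    ∃ b, (l.map c).count b = 1 := by
  by_contra! hnone
  have partner : ∀ x ∈ l, ∃ y ∈ l, y ≠ x ∧ s(y, x) = s(e, f) := by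
    intro x hx
    by_contra! hx'
    refine hnone _ (count_map_eq_one_s17 hl hx fun y hy hyx => ?_)
    by_contra hyx'
    exact hx' y hy hyx' ((hc y hy x hx hyx).resolve_left hyx')
  obtain ⟨x₀, hx₀⟩ := exists_mem_of_ne_nil l hne
  obtain ⟨y₀, hy₀, hyx₀, hpair₀⟩ := partner x₀ hx₀
  have hef : e ≠ f := by rintro rfl; grind [Sym2.eq_iff]
  refine hperm ((perm_ext_iff_of_nodup hl (by simp [hef])).2 fun z => ⟨fun hz => ?_, fun hz => ?_⟩)
  · obtain ⟨y, -, -, hpair⟩ := partner z hz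
    have hz : z ∈ s(e, f) := hpair ▸ Sym2.mem_mk_right y z
    simpa using hz
  · rw [Sym2.eq_iff] at hpair₀
    grind

end List

namespace SimpleGraph

variable {V : Type*} {G : SimpleGraph V}

theorem Walk.exists_edges_eq_of_length_eq_two {u v : V} {p : G.Walk u v} (hp : p.length = 2) :
    ∃ w, G.Adj u w ∧ G.Adj w v ∧ p.edges = [s(u, w), s(w, v)] := by
  match p, hp with
  | .cons huw (.cons hwv .nil), _ => exact ⟨_, huw, hwv, rfl⟩

theorem Connected.isStrongCFCColoring_of_forall_geodesic {c : Sym2 V → ℕ} (hc : G.Connected)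
    (h : ∀ u v (p : G.Walk u v), p.length = G.dist u v → p.edges ≠ [] →
      ∃ a, (p.edges.map c).count a = 1) :
    IsStrongCFCColoring G c := by
  intro u v huv
  obtain ⟨p, hp⟩ := hc.exists_walk_length_eq_dist u v
  have hpos : 0 < p.edges.length := by
    rw [Walk.length_edges, hp]
    exact (hc.preconnected u v).pos_dist_of_ne huv
  exact ⟨p, p.isPath_of_length_eq_dist hp, hp, h u v p hp (List.ne_nil_of_length_pos hpos)⟩

theorem Connected.isStrongCFCColoring_of_injOn {c : Sym2 V → ℕ} (hc : G.Connected)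
    (hinj : Set.InjOn c G.edgeSet) : IsStrongCFCColoring G c := by
  refine hc.isStrongCFCColoring_of_forall_geodesic fun u v p hp hne => ?_
  obtain ⟨e, he⟩ := List.exists_mem_of_ne_nil _ hne
  exact ⟨c e, List.count_map_eq_one_s17 (p.isPath_of_length_eq_dist hp).edges_nodup he
    fun x hx => hinj (p.edges_subset_edgeSet hx) (p.edges_subset_edgeSet he)⟩

/-- By `hef`, `e` and `f` are never the two edges of a geodesic, which is the only kind of
geodesic on which no color is unique once their colors are merged. -/
theorem Connected.isStrongCFCColoring_of_merge {c : Sym2 V → ℕ} {e f : Sym2 V}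
    (hc : G.Connected)
    (hmerge : ∀ x ∈ G.edgeSet, ∀ y ∈ G.edgeSet, c x = c y → x = y ∨ s(x, y) = s(e, f))
    (hef : ∀ a b d, s(a, b) = e → s(b, d) = f → G.Adj a d) :
    IsStrongCFCColoring G c := by
  refine hc.isStrongCFCColoring_of_forall_geodesic fun u v p hp hne => ?_
  refine List.exists_count_map_eq_one_of_not_perm (p.isPath_of_length_eq_dist hp).edges_nodup hne
    (fun x hx y hy => hmerge x (p.edges_subset_edgeSet hx) y (p.edges_subset_edgeSet hy))
    fun hperm => ?_
  have hlen : p.length = 2 := by simpa using hperm.length_eq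
  obtain ⟨w, -, -, hedges⟩ := p.exists_edges_eq_of_length_eq_two hlen
  have huv : G.Adj u v := by
    rw [hedges, List.perm_pair] at hperm
    simp only [List.cons.injEq, and_true] at hperm
    rcases hperm with ⟨hue, hvf⟩ | ⟨huf, hve⟩
    · exact hef u w v hue hvf
    · exact (hef v w u (Sym2.eq_swap.trans hve) (Sym2.eq_swap.trans huf)).symm
  have := dist_eq_one_iff_adj.2 huv
  omega

theorem IsStrongCFCColoring.ne_of_dist_eq_two {c : Sym2 V → ℕ} (hcol : IsStrongCFCColoring G c)
    {a b v : V} (hab : G.dist a b = 2) (hv : ∀ w, G.Adj a w → G.Adj w b → w = v) :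
    c s(a, v) ≠ c s(v, b) := by
  intro hcv
  have hne : a ≠ b := by rintro rfl; simp at hab
  obtain ⟨p, -, hp, col, hcount⟩ := hcol a b hne
  obtain ⟨w, haw, hwb, hedges⟩ := p.exists_edges_eq_of_length_eq_two (hp.trans hab)
  obtain rfl := hv w haw hwb
  rw [hedges] at hcount
  by_cases hcolor : c s(a, w) = col <;> simp_all [List.count_cons]

theorem IsStrongCFCColoring.injOn_edgeSet_of_star {c : Sym2 V → ℕ} {v : V}
    (hcol : IsStrongCFCColoring G c) (hv : ∀ a b, G.Adj a b → a = v ∨ b = v) :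
    Set.InjOn c G.edgeSet := by
  have hleaf : ∀ a, G.Adj v a → ∀ w, G.Adj a w → w = v := fun a hva w haw =>
    (hv a w haw).resolve_left fun hav => hva.ne hav.symm
  have hstar : ∀ g ∈ G.edgeSet, ∃ a, G.Adj v a ∧ g = s(v, a) := by
    intro g hg
    induction g using Sym2.ind with
    | _ x y =>
      rcases hv x y hg with rfl | rfl
      · exact ⟨y, hg, rfl⟩
      · exact ⟨x, hg.symm, Sym2.eq_swap⟩
  intro g₁ hg₁ g₂ hg₂ hcg
  obtain ⟨a, hva, rfl⟩ := hstar g₁ hg₁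
  obtain ⟨b, hvb, rfl⟩ := hstar g₂ hg₂
  refine Sym2.congr_right.2 (by_contra fun hab => ?_)
  have hdist : G.dist a b = 2 := by
    rw [dist, ENat.toNat_eq_iff two_ne_zero]
    refine edist_eq_two_iff.2 ⟨hab, fun h => ?_, v, G.mem_commonNeighbors.2 ⟨hva.symm, hvb.symm⟩⟩
    exact hvb.ne (hleaf a hva b h).symm
  exact hcol.ne_of_dist_eq_two hdist (fun w haw _ => hleaf a hva w haw) (by rwa [Sym2.eq_swap])

theorem exists_edges_of_not_star [Nonempty V] (h : ¬ ∃ v, ∀ a b, G.Adj a b → a = v ∨ b = v) :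
    ∃ e ∈ G.edgeSet, ∃ f ∈ G.edgeSet, e ≠ f ∧ ∀ a b d, s(a, b) = e → s(b, d) = f → G.Adj a d := by
  push Not at h
  have of_disjoint : ∀ x y z w, G.Adj x y → G.Adj z w → x ≠ z → x ≠ w → y ≠ z → y ≠ w →
      ∃ e ∈ G.edgeSet, ∃ f ∈ G.edgeSet, e ≠ f ∧
        ∀ a b d, s(a, b) = e → s(b, d) = f → G.Adj a d := by
    intro x y z w hxy hzw hxz hxw hyz hyw
    refine ⟨s(x, y), hxy, s(z, w), hzw, ?_, fun a b d hab hbd => ?_⟩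
    · simp [hxz, hxw]
    · rw [Sym2.eq_iff] at hab hbd
      grind
  obtain ⟨x, y, hxy, -, -⟩ := h (Classical.arbitrary V)
  by_cases hdisj : ∃ a b, G.Adj a b ∧ x ≠ a ∧ x ≠ b ∧ y ≠ a ∧ y ≠ b
  · obtain ⟨a, b, hab, hxa, hxb, hya, hyb⟩ := hdisj
    exact of_disjoint x y a b hxy hab hxa hxb hya hyb
  push Not at hdisj
  obtain ⟨z, hyz, hzx⟩ : ∃ z, G.Adj y z ∧ z ≠ x := by
    obtain ⟨a, b, hab, hax, hbx⟩ := h x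
    by_cases hya : y = a
    · exact ⟨b, hya ▸ hab, hbx⟩
    · exact ⟨a, (hdisj a b hab hax.symm hbx.symm hya) ▸ hab.symm, hax⟩
  obtain ⟨w, hxw, hwy⟩ : ∃ w, G.Adj x w ∧ w ≠ y := by
    obtain ⟨a, b, hab, hay, hby⟩ := h y
    by_cases hxa : x = a
    · exact ⟨b, hxa ▸ hab, hby⟩
    · have hxb : x = b := by
        by_contra hxb
        exact hby (hdisj a b hab hxa hxb (Ne.symm hay)).symm
      exact ⟨a, hxb ▸ hab.symm, hay⟩
  by_cases hwz : w = z
  · subst hwz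
    refine ⟨s(x, y), hxy, s(y, w), hyz, ?_, fun a b d hab hbd => ?_⟩
    · simp [hxy.ne, hxw.ne]
    · rw [Sym2.eq_iff] at hab hbd
      grind [hxy.ne, hyz.ne, hxw.ne]
  · exact of_disjoint y z x w hyz hxw hxy.ne.symm (Ne.symm hwy) hzx (Ne.symm hwz)

variable [Fintype V] [DecidableEq V] [DecidableRel G.Adj]

theorem Connected.exists_isStrongCFCColoring_lt_card (hc : G.Connected) :
    ∃ c : Sym2 V → ℕ, (∀ e ∈ G.edgeSet, c e < #G.edgeFinset) ∧ IsStrongCFCColoring G c := by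
  have hmem : ∀ e ∈ G.edgeSet, e ∈ G.edgeFinset.toList := by simp
  refine ⟨G.edgeFinset.toList.idxOf, fun e he => ?_, hc.isStrongCFCColoring_of_injOn ?_⟩
  · simpa using List.idxOf_lt_length_of_mem (hmem e he)
  · exact fun x hx y hy hxy => (List.idxOf_inj (hmem x hx)).1 hxy

theorem Connected.scfc_lt_card_edgeFinset {e f : Sym2 V} (hc : G.Connected) (he : e ∈ G.edgeSet)
    (hf : f ∈ G.edgeSet) (hne : e ≠ f) (hef : ∀ a b d, s(a, b) = e → s(b, d) = f → G.Adj a d) :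
    scfc G < #G.edgeFinset := by
  set L := (G.edgeFinset.erase f).toList
  let merge : Sym2 V → Sym2 V := fun g => if g = f then e else g
  have hmem : ∀ g ∈ G.edgeSet, merge g ∈ L := by
    intro g hg
    by_cases hgf : g = f <;> simp [L, merge, hgf, hne, hg, he]
  have hcard : L.length + 1 = #G.edgeFinset := by
    simp [L, Finset.card_erase_add_one (mem_edgeFinset.2 hf)]
  have hmerge : ∀ x ∈ G.edgeSet, ∀ y ∈ G.edgeSet, L.idxOf (merge x) = L.idxOf (merge y) →
      x = y ∨ s(x, y) = s(e, f) := by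
    intro x hx y hy hxy
    have := (List.idxOf_inj (hmem x hx)).1 hxy
    simp only [merge] at this
    split_ifs at this <;> simp_all [Sym2.eq_swap]
  have : scfc G ≤ L.length := Nat.sInf_le ⟨_, fun g hg => List.idxOf_lt_length_of_mem (hmem g hg),
    hc.isStrongCFCColoring_of_merge hmerge hef⟩
  omega

theorem Connected.card_edgeFinset_le_scfc_of_star {v : V} (hc : G.Connected)
    (hv : ∀ a b, G.Adj a b → a = v ∨ b = v) : #G.edgeFinset ≤ scfc G := by
  obtain ⟨c, hlt, hcol⟩ : ∃ c : Sym2 V → ℕ, (∀ e ∈ G.edgeSet, c e < scfc G) ∧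
      IsStrongCFCColoring G c :=
    Nat.sInf_mem (s := {k | ∃ c : Sym2 V → ℕ, (∀ e ∈ G.edgeSet, c e < k) ∧
      IsStrongCFCColoring G c}) ⟨_, hc.exists_isStrongCFCColoring_lt_card⟩
  calc #G.edgeFinset ≤ #(range (scfc G)) :=
        card_le_card_of_injOn c (fun g hg => by simpa using hlt g (by simpa using hg))
          (by simpa using hcol.injOn_edgeSet_of_star hv)
    _ = scfc G := card_range _

end SimpleGraph

theorem scfc_eq_size_iff_star_general {V : Type*} [Fintype V] [DecidableEq V]
    (G : SimpleGraph V) [DecidableRel G.Adj] (hc : G.Connected) :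
    scfc G = G.edgeFinset.card ↔ ∃ v : V, ∀ a b : V, G.Adj a b → a = v ∨ b = v := by
  refine ⟨fun h => ?_, fun ⟨v, hv⟩ => ?_⟩
  · by_contra hstar
    have := hc.nonempty
    obtain ⟨e, he, f, hf, hne, hef⟩ := exists_edges_of_not_star hstar
    exact (hc.scfc_lt_card_edgeFinset he hf hne hef).ne h
  · exact le_antisymm (Nat.sInf_le hc.exists_isStrongCFCColoring_lt_card)
      (hc.card_edgeFinset_le_scfc_of_star hv)

theorem scfc_eq_size_iff_star {V : Type*} [Fintype V] [DecidableEq V] [Nontrivial V]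
    (G : SimpleGraph V) [DecidableRel G.Adj] (hc : G.Connected) :
    scfc G = G.edgeFinset.card ↔ ∃ v : V, ∀ a b : V, G.Adj a b → a = v ∨ b = v :=
  scfc_eq_size_iff_star_general G hc
end

section
/- For the Möbius ladder M_{2k} (k ≥ 3), scfc(M_{2k}) = 2 if and only if 3 ≤ k ≤ 7. -/
open SimpleGraph

/-- The Möbius ladder `M_{2k}`: the circulant graph on `ZMod (2 * k)` with connections
`±1` (the `2k`-cycle) and `k` (the "rungs", including the two crossing edges). -/
def mobiusLadder (k : ℕ) : SimpleGraph (ZMod (2 * k)) :=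
  SimpleGraph.fromRel (fun u v => v = u + 1 ∨ v = u + (k : ZMod (2 * k)))

/-!
Let `t` be the least absolute residue of `v - u` modulo `2k`. Going around the `2k`-cycle takes
`|t|` steps, crossing one rung first takes `k + 1 - |t|`; the minimum `ladderNorm (v - u)` changes by
at most one along an edge, so it bounds the length of every walk from `u` to `v`.

For `k ≥ 8` this makes the arc `u, u + 1, …, u + j` (`j ≤ 4`) the only shortest path between its
ends. In a colouring with two colours the arcs of length `2` force consecutive cycle edges to get
different colours, so the arc of length `4` carries each colour twice and is not conflict-free.
For `3 ≤ k ≤ 7`, colouring with `1` exactly the edges that leave an odd vertex forwards works, which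
is checked by enumerating all walks of length `ladderNorm (v - u)`. One colour is never enough, since
`0` and `2` are at distance `2`.
-/

section StrongCFC

variable {V : Type*} {G : SimpleGraph V}

theorem exists_walk_support_eq_of_isChain {l : List V} {u v : V} (hu : l.head? = some u)
    (hv : l.getLast? = some v) (hl : l.IsChain G.Adj) : ∃ p : G.Walk u v, p.support = l := by
  have hne : l ≠ [] := by rintro rfl; simp at hu
  obtain rfl : l.head hne = u := by simpa [List.head?_eq_some_head hne] using hu
  obtain rfl : l.getLast hne = v := by simpa [List.getLast?_eq_some_getLast hne] using hv
  exact ⟨Walk.ofSupport l hne hl, Walk.support_ofSupport hne hl⟩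

theorem le_add_length_of_lipschitz (d : V → ℕ) (hd : ∀ x y, G.Adj x y → d y ≤ d x + 1) {x y : V}
    (p : G.Walk x y) : d y ≤ d x + p.length := by
  induction p with
  | nil => simp
  | cons h _ ih => have := hd _ _ h; rw [Walk.length_cons]; omega

theorem two_le_of_isStrongCFCColoring {c : Sym2 V → ℕ} {m : ℕ} {u v : V}
    (huv : 2 ≤ G.dist u v) (hc : ∀ e ∈ G.edgeSet, c e < m) (hcfc : IsStrongCFCColoring G c) :
    2 ≤ m := by
  by_contra! hm
  have hne : u ≠ v := by rintro rfl; simp at huv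
  obtain ⟨p, -, hlen, a, ha⟩ := hcfc u v hne
  have hzero : ∀ x ∈ p.edges.map c, x = 0 := by
    simp only [List.mem_map]
    rintro _ ⟨e, he, rfl⟩
    have := hc e (p.edges_subset_edgeSet he)
    omega
  rw [List.eq_replicate_iff.mpr ⟨rfl, hzero⟩, List.count_replicate, List.length_map,
    Walk.length_edges] at ha
  split_ifs at ha
  omega

theorem scfc_eq_two {u v : V} (huv : 2 ≤ G.dist u v) {c : Sym2 V → ℕ}
    (hc : ∀ e ∈ G.edgeSet, c e < 2) (hcfc : IsStrongCFCColoring G c) : scfc G = 2 :=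
  le_antisymm (Nat.sInf_le ⟨c, hc, hcfc⟩)
    (le_csInf ⟨2, c, hc, hcfc⟩ fun _ ⟨_, hc', hcfc'⟩ => two_le_of_isStrongCFCColoring huv hc' hcfc')

theorem exists_coloring_of_scfc_eq_two (h : scfc G = 2) :
    ∃ c : Sym2 V → ℕ, (∀ e ∈ G.edgeSet, c e < 2) ∧ IsStrongCFCColoring G c :=
  h ▸ Nat.sInf_mem (Nat.nonempty_of_pos_sInf (h ▸ two_pos))

end StrongCFC

section MobiusLadder

variable {k : ℕ}

theorem ZMod.natCast_add_self_two_mul : (k : ZMod (2 * k)) + k = 0 := by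
  have := ZMod.natCast_self (2 * k)
  push_cast at this
  linear_combination this

theorem ZMod.self_ne_add_natCast {n : ℕ} (u : ZMod n) {j : ℕ} (hj : 0 < j) (hjn : j < n) :
    u ≠ u + j := by
  rw [Ne, left_eq_add, ZMod.natCast_eq_zero_iff]
  exact fun h => (Nat.le_of_dvd hj h).not_gt hjn

theorem mobiusLadder_adj_cases {u v : ZMod (2 * k)} (h : (mobiusLadder k).Adj u v) :
    v = u + 1 ∨ v = u - 1 ∨ v = u + k := by
  obtain ⟨-, (h | h) | (h | h)⟩ := h
  · exact Or.inl h
  · exact Or.inr (Or.inr h)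
  · exact Or.inr (Or.inl (by rw [h]; ring))
  · refine Or.inr (Or.inr ?_)
    rw [h]
    linear_combination -(ZMod.natCast_add_self_two_mul (k := k))

theorem mobiusLadder_adj_add_one (u : ZMod (2 * k)) : (mobiusLadder k).Adj u (u + 1) := by
  refine ⟨fun h => ?_, Or.inl (Or.inl rfl)⟩
  have : ((1 : ℕ) : ZMod (2 * k)) ≠ 0 := by rw [Ne, ZMod.natCast_eq_zero_iff, Nat.dvd_one]; omega
  exact this (by simpa using h)

theorem mobiusLadder_adj_sub_one (u : ZMod (2 * k)) : (mobiusLadder k).Adj u (u - 1) := by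
  have := (mobiusLadder_adj_add_one (u - 1)).symm
  rwa [sub_add_cancel] at this

theorem mobiusLadder_adj_add_self [NeZero k] (u : ZMod (2 * k)) :
    (mobiusLadder k).Adj u (u + k) :=
  ⟨ZMod.self_ne_add_natCast u (Nat.pos_of_neZero k) (by have := NeZero.ne k; omega),
    Or.inl (Or.inr rfl)⟩

def ladderNorm (k : ℕ) (g : ZMod (2 * k)) : ℕ :=
  min g.valMinAbs.natAbs (k + 1 - g.valMinAbs.natAbs)

theorem ZMod.natAbs_valMinAbs_le_add_sub {n : ℕ} (g h : ZMod n) :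
    g.valMinAbs.natAbs ≤ h.valMinAbs.natAbs + (g - h).valMinAbs.natAbs := by
  simpa using (natAbs_valMinAbs_add_le h (g - h)).trans (Int.natAbs_add_le _ _)

theorem ladderNorm_natCast {n : ℕ} (hn : n ≤ k) : ladderNorm k n = min n (k + 1 - n) := by
  rw [ladderNorm, ZMod.valMinAbs_natCast_of_le_half (by omega), Int.natAbs_natCast]

section NeZero

variable [NeZero k]

theorem ZMod.natAbs_valMinAbs_le_self (g : ZMod (2 * k)) : g.valMinAbs.natAbs ≤ k := by
  simpa using ZMod.natAbs_valMinAbs_le g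

theorem ZMod.natAbs_valMinAbs_one : (1 : ZMod (2 * k)).valMinAbs.natAbs = 1 := by
  have := ZMod.valMinAbs_natCast_of_le_half (n := 2 * k) (a := 1) (by have := NeZero.ne k; omega)
  simp_all

theorem ZMod.natAbs_valMinAbs_add_natCast_self (g : ZMod (2 * k)) :
    (g + k).valMinAbs.natAbs = k - g.valMinAbs.natAbs := by
  obtain ⟨hlo, hhi⟩ := g.valMinAbs_mem_Ioc
  push_cast at hlo hhi
  rcases le_or_gt g.valMinAbs 0 with hg | hg
  · have : (g + k).valMinAbs = g.valMinAbs + k := by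
      rw [ZMod.valMinAbs_spec]
      refine ⟨by push_cast; rfl, ?_, ?_⟩ <;> push_cast <;> omega
    omega
  · have : (g + k).valMinAbs = g.valMinAbs - k := by
      rw [ZMod.valMinAbs_spec]
      refine ⟨?_, ?_, ?_⟩
      · push_cast
        linear_combination (ZMod.natCast_add_self_two_mul (k := k))
      all_goals push_cast; omega
    omega

theorem ladderNorm_le_add_one_of_adj (u : ZMod (2 * k)) {x y : ZMod (2 * k)}
    (h : (mobiusLadder k).Adj x y) : ladderNorm k (y - u) ≤ ladderNorm k (x - u) + 1 := by
  have hx := ZMod.natAbs_valMinAbs_le_self (x - u)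
  have hy := ZMod.natAbs_valMinAbs_le_self (y - u)
  unfold ladderNorm
  obtain hstep | rfl : (y - x).valMinAbs.natAbs = 1 ∨ y = x + k := by
    rcases mobiusLadder_adj_cases h with rfl | rfl | rfl
    · simp [ZMod.natAbs_valMinAbs_one]
    · simp [ZMod.natAbs_valMinAbs_neg, ZMod.natAbs_valMinAbs_one]
    · exact Or.inr rfl
  · have h₁ := ZMod.natAbs_valMinAbs_le_add_sub (y - u) (x - u)
    have h₂ := ZMod.natAbs_valMinAbs_le_add_sub (x - u) (y - u)
    rw [sub_sub_sub_cancel_right] at h₁ h₂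
    rw [← neg_sub y x, ZMod.natAbs_valMinAbs_neg] at h₂
    omega
  · rw [show x + k - u = x - u + k by ring, ZMod.natAbs_valMinAbs_add_natCast_self]
    omega

theorem ladderNorm_sub_le_length {u v : ZMod (2 * k)} (p : (mobiusLadder k).Walk u v) :
    ladderNorm k (v - u) ≤ p.length := by
  have := le_add_length_of_lipschitz (fun x => ladderNorm k (x - u))
    (fun _ _ => ladderNorm_le_add_one_of_adj u) p
  simpa [ladderNorm] using this

theorem ladderNorm_natCast_add_self {n : ℕ} (hn : n ≤ k) :
    ladderNorm k (n + k) = min (k - n) (n + 1) := by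
  rw [ladderNorm, ZMod.natAbs_valMinAbs_add_natCast_self, ZMod.valMinAbs_natCast_of_le_half (by omega),
    Int.natAbs_natCast]
  omega

def ladderWalkSupports (k : ℕ) : ZMod (2 * k) → ℕ → List (List (ZMod (2 * k)))
  | u, 0 => [[u]]
  | u, n + 1 =>
    [1, -1, (k : ZMod (2 * k))].flatMap fun s => (ladderWalkSupports k (u + s) n).map (u :: ·)

theorem head?_length_isChain_of_mem_ladderWalkSupports {u : ZMod (2 * k)} {n : ℕ}
    {l : List (ZMod (2 * k))} (hl : l ∈ ladderWalkSupports k u n) :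
    l.head? = some u ∧ l.length = n + 1 ∧ l.IsChain (mobiusLadder k).Adj := by
  induction n generalizing u l with
  | zero => simp_all [ladderWalkSupports]
  | succ n ih =>
    simp only [ladderWalkSupports, List.mem_flatMap, List.mem_map] at hl
    obtain ⟨s, hs, l, hl, rfl⟩ := hl
    obtain ⟨hhead, hlen, hchain⟩ := ih hl
    obtain ⟨l, rfl⟩ := List.head?_eq_some_iff.mp hhead
    refine ⟨rfl, by simpa using hlen, List.isChain_cons_cons.mpr ⟨?_, hchain⟩⟩
    simp only [List.mem_cons, List.not_mem_nil, or_false] at hs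
    rcases hs with rfl | rfl | rfl
    · exact mobiusLadder_adj_add_one u
    · simpa [sub_eq_add_neg] using mobiusLadder_adj_sub_one u
    · exact mobiusLadder_adj_add_self u

theorem isStrongCFCColoring_of_ladderWalkSupports {c : Sym2 (ZMod (2 * k)) → ℕ}
    (h : ∀ u v : ZMod (2 * k), u ≠ v → ∃ l ∈ ladderWalkSupports k u (ladderNorm k (v - u)),
      l.getLast? = some v ∧ l.Nodup ∧
      ∃ a ∈ (l.zipWith (s(·, ·)) l.tail).map c, ((l.zipWith (s(·, ·)) l.tail).map c).count a = 1) :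
    IsStrongCFCColoring (mobiusLadder k) c := by
  intro u v huv
  obtain ⟨l, hl, hlast, hnodup, a, -, ha⟩ := h u v huv
  obtain ⟨hhead, hlen, hchain⟩ := head?_length_isChain_of_mem_ladderWalkSupports hl
  obtain ⟨p, rfl⟩ := exists_walk_support_eq_of_isChain hhead hlast hchain
  have hplen : p.length = ladderNorm k (v - u) := by simpa using hlen
  obtain ⟨q, hq⟩ := (Walk.reachable p).exists_walk_length_eq_dist
  refine ⟨p, by rwa [Walk.isPath_def], le_antisymm ?_ (dist_le p), a, ?_⟩
  · rw [hplen, ← hq]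
    exact ladderNorm_sub_le_length q
  · rwa [Walk.edges_eq_zipWith_support]

end NeZero

def ladderColoring (k : ℕ) : Sym2 (ZMod (2 * k)) → ℕ :=
  Sym2.lift ⟨fun u v =>
    if Odd u.val ∧ (v = u + 1 ∨ v = u + k) ∨ Odd v.val ∧ (u = v + 1 ∨ u = v + k) then 1 else 0,
    fun _ _ => by simp only [or_comm]⟩

theorem ladderColoring_lt_two (e : Sym2 (ZMod (2 * k))) : ladderColoring k e < 2 := by
  induction e using Sym2.ind
  simp only [ladderColoring, Sym2.lift_mk]
  split_ifs <;> norm_num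

theorem isStrongCFCColoring_ladderColoring (hk₃ : 3 ≤ k) (hk₇ : k ≤ 7) :
    IsStrongCFCColoring (mobiusLadder k) (ladderColoring k) := by
  interval_cases k <;> exact isStrongCFCColoring_of_ladderWalkSupports (by decide)

def arcEdges (u : ZMod (2 * k)) : ℕ → List (Sym2 (ZMod (2 * k)))
  | 0 => []
  | j + 1 => s(u, u + 1) :: arcEdges (u + 1) j

theorem exists_walk_add_natCast_length_eq (u : ZMod (2 * k)) (j : ℕ) :
    ∃ p : (mobiusLadder k).Walk u (u + j), p.length = j := by
  induction j generalizing u with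
  | zero => exact ⟨Walk.nil.copy rfl (by simp), by simp⟩
  | succ j ih =>
    obtain ⟨p, hp⟩ := ih (u + 1)
    refine ⟨(Walk.cons (mobiusLadder_adj_add_one u) p).copy rfl (by push_cast; ring), ?_⟩
    simp [hp]

theorem edges_eq_arcEdges_of_length_le (hk : 8 ≤ k) {j : ℕ} (hj : j ≤ 4) {u v : ZMod (2 * k)}
    (p : (mobiusLadder k).Walk u v) (hv : v = u + j) (hp : p.length ≤ j) :
    p.edges = arcEdges u j := by
  have : NeZero k := ⟨by omega⟩
  induction j generalizing u with
  | zero => exact List.eq_nil_of_length_eq_zero (by rw [Walk.length_edges]; omega)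
  | succ j ih =>
    have huv : u ≠ v := hv ▸ ZMod.self_ne_add_natCast u (Nat.succ_pos j) (by omega)
    obtain ⟨w, h, q, rfl⟩ := Walk.exists_eq_cons_of_ne huv p
    rw [Walk.length_cons] at hp
    have hq := ladderNorm_sub_le_length q
    rcases mobiusLadder_adj_cases h with rfl | rfl | rfl
    · rw [Walk.edges_cons, ih (by omega) q (by rw [hv]; push_cast; ring) (by omega)]
      rfl
    · have hvw : v - (u - 1) = ((j + 2 : ℕ) : ZMod (2 * k)) := by rw [hv]; push_cast; ring
      rw [hvw, ladderNorm_natCast (by omega)] at hq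
      omega
    · have hvw : v - (u + k) = (j + 1 : ℕ) + k := by
        rw [hv]; push_cast; linear_combination -(ZMod.natCast_add_self_two_mul (k := k))
      rw [hvw, ladderNorm_natCast_add_self (by omega)] at hq
      omega

theorem exists_count_eq_one_arcEdges (hk : 8 ≤ k) {c : Sym2 (ZMod (2 * k)) → ℕ}
    (hcfc : IsStrongCFCColoring (mobiusLadder k) c) {j : ℕ} (hj₀ : 0 < j) (hj : j ≤ 4)
    (u : ZMod (2 * k)) : ∃ a, ((arcEdges u j).map c).count a = 1 := by
  obtain ⟨p, -, hlen, a, ha⟩ := hcfc u (u + j) (ZMod.self_ne_add_natCast u hj₀ (by omega))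
  obtain ⟨q, hq⟩ := exists_walk_add_natCast_length_eq u j
  have hp : p.length ≤ j := by
    have := dist_le q
    omega
  rw [edges_eq_arcEdges_of_length_le hk hj p rfl hp] at ha
  exact ⟨a, ha⟩

theorem count_ne_one_of_alternating {x₀ x₁ x₂ x₃ : ℕ} (h₀ : x₀ < 2) (h₁ : x₁ < 2) (h₂ : x₂ < 2)
    (h₃ : x₃ < 2) (h₀₁ : x₀ ≠ x₁) (h₁₂ : x₁ ≠ x₂) (h₂₃ : x₂ ≠ x₃) (a : ℕ) :
    [x₀, x₁, x₂, x₃].count a ≠ 1 := by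
  obtain rfl : x₂ = x₀ := by omega
  obtain rfl : x₃ = x₁ := by omega
  simp only [List.count_cons, List.count_nil]
  split_ifs <;> omega

theorem not_isStrongCFCColoring_of_lt_two (hk : 8 ≤ k) {c : Sym2 (ZMod (2 * k)) → ℕ}
    (hc : ∀ e ∈ (mobiusLadder k).edgeSet, c e < 2) :
    ¬ IsStrongCFCColoring (mobiusLadder k) c := by
  intro hcfc
  have hlt (u : ZMod (2 * k)) : c s(u, u + 1) < 2 := hc _ (mobiusLadder_adj_add_one u)
  have hne (u : ZMod (2 * k)) : c s(u, u + 1) ≠ c s(u + 1, u + 1 + 1) := by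
    obtain ⟨a, ha⟩ := exists_count_eq_one_arcEdges hk hcfc two_pos (by norm_num) u
    intro heq
    simp only [arcEdges, List.map, heq, List.count_cons, List.count_nil] at ha
    split_ifs at ha <;> omega
  obtain ⟨a, ha⟩ := exists_count_eq_one_arcEdges hk hcfc four_pos le_rfl 0
  exact count_ne_one_of_alternating (hlt _) (hlt _) (hlt _) (hlt _) (hne _) (hne _) (hne _) a ha

theorem two_le_dist_zero_two (hk : 3 ≤ k) : 2 ≤ (mobiusLadder k).dist 0 2 := by
  have : NeZero k := ⟨by omega⟩
  obtain ⟨p, -⟩ := exists_walk_add_natCast_length_eq (0 : ZMod (2 * k)) 2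
  rw [zero_add, Nat.cast_ofNat] at p
  obtain ⟨q, hq⟩ := p.reachable.exists_walk_length_eq_dist
  have hnorm : ladderNorm k 2 = 2 := by
    have := ladderNorm_natCast (k := k) (n := 2) (by omega)
    rw [Nat.cast_ofNat] at this
    omega
  have := ladderNorm_sub_le_length q
  rw [sub_zero, hnorm] at this
  omega

end MobiusLadder

theorem scfc_mobiusLadder (k : ℕ) (hk : 3 ≤ k) :
    scfc (mobiusLadder k) = 2 ↔ k ≤ 7 := by
  constructor
  · intro h
    by_contra! hk₈
    obtain ⟨c, hc, hcfc⟩ := exists_coloring_of_scfc_eq_two h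
    exact not_isStrongCFCColoring_of_lt_two hk₈ hc hcfc
  · intro hk₇
    exact scfc_eq_two (two_le_dist_zero_two hk) (fun e _ => ladderColoring_lt_two e)
      (isStrongCFCColoring_ladderColoring hk hk₇)
end
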